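/- arXiv:2110.03280 — 7 statements merged into one kernel-verified Lean document; each statement's English description precedes it below -/
import Mathlib

section
/- Let 𝔤(a,v,A) be a Hermitian almost abelian Lie algebra with A invertible. Then (J,g) is LCSKT with closed 1-form α if and only if α vanishes on 𝔫₁, a·α(e₁) = 0, and the endomorphism (a + α(e₂ₙ))A + A² + AᵗA of 𝔫₁ is skew-adjoint with respect to g. -/
open Module

section GeneralDefs

variable {L : Type*} [LieRing L] [LieAlgebra ℝ L]

/-- A complex structure on a real Lie algebra: `J² = -id` together with the
integrability condition `[JX,JY] − J[JX,Y] − J[X,JY] − [X,Y] = 0`. -/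
def IsComplexStructure (J : L →ₗ[ℝ] L) : Prop :=
  (∀ x : L, J (J x) = -x) ∧
  (∀ x y : L, ⁅J x, J y⁆ - J ⁅J x, y⁆ - J ⁅x, J y⁆ - ⁅x, y⁆ = 0)

/-- An inner product compatible with `J`: symmetric, positive definite and
`J`-invariant bilinear form. -/
def IsCompatibleMetric (J : L →ₗ[ℝ] L) (g : L →ₗ[ℝ] L →ₗ[ℝ] ℝ) : Prop :=
  (∀ x y : L, g x y = g y x) ∧
  (∀ x : L, x ≠ 0 → 0 < g x x) ∧
  (∀ x y : L, g (J x) (J y) = g x y)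

/-- A Hermitian structure `(J,g)`. -/
def IsHermitianStructure (J : L →ₗ[ℝ] L) (g : L →ₗ[ℝ] L →ₗ[ℝ] ℝ) : Prop :=
  IsComplexStructure J ∧ IsCompatibleMetric J g

/-- The Bismut torsion 3-form
`H(X,Y,Z) = −g([JX,JY],Z) − g([JY,JZ],X) − g([JZ,JX],Y)`. -/
def bismutH (J : L →ₗ[ℝ] L) (g : L →ₗ[ℝ] L →ₗ[ℝ] ℝ) (X Y Z : L) : ℝ :=
  -(g ⁅J X, J Y⁆ Z) - g ⁅J Y, J Z⁆ X - g ⁅J Z, J X⁆ Y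

/-- The Chevalley–Eilenberg differential of a (alternating) 3-form. -/
def dThree (H : L → L → L → ℝ) (W X Y Z : L) : ℝ :=
  -(H ⁅W, X⁆ Y Z) + H ⁅W, Y⁆ X Z - H ⁅W, Z⁆ X Y
    - H ⁅X, Y⁆ W Z + H ⁅X, Z⁆ W Y - H ⁅Y, Z⁆ W X

/-- The wedge product of a 1-form with a 3-form. -/
def wedgeOneThree (α : Module.Dual ℝ L) (H : L → L → L → ℝ) (W X Y Z : L) : ℝ :=
  α W * H X Y Z - α X * H W Y Z + α Y * H W X Z - α Z * H W X Y

/-- A 1-form is closed iff `dα(X,Y) = −α([X,Y]) = 0` for all `X,Y`. -/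
def IsClosedOneForm (α : Module.Dual ℝ L) : Prop :=
  ∀ X Y : L, α ⁅X, Y⁆ = 0

/-- The Hermitian structure `(J,g)` is LCSKT: there is a nonzero closed
1-form `α` with `dH = α ∧ H`. -/
def IsLCSKT (J : L →ₗ[ℝ] L) (g : L →ₗ[ℝ] L →ₗ[ℝ] ℝ) : Prop :=
  ∃ α : Module.Dual ℝ L, α ≠ 0 ∧ IsClosedOneForm α ∧
    ∀ W X Y Z : L,
      dThree (bismutH J g) W X Y Z = wedgeOneThree α (bismutH J g) W X Y Z

end GeneralDefs

/-- `L` is isomorphic to `𝔥₈`: it has a basis `e₀,…,e₅` whose only nonzero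
bracket (among pairs `i < j`) is `[e₀,e₁] = e₅`. -/
def IsH8 (L : Type*) [LieRing L] [LieAlgebra ℝ L] : Prop :=
  ∃ e : Basis (Fin 6) ℝ L,
    ⁅e 0, e 1⁆ = e 5 ∧
    ∀ i j : Fin 6, i < j → ¬(i = 0 ∧ j = 1) → ⁅e i, e j⁆ = 0

/-- `L` is isomorphic to `𝔥₁₆`: it has a basis `e₀,…,e₅` whose only nonzero
brackets (among pairs `i < j`) are `[e₀,e₁] = e₃`, `[e₀,e₃] = e₄`,
`[e₁,e₃] = e₅`. -/
def IsH16 (L : Type*) [LieRing L] [LieAlgebra ℝ L] : Prop :=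
  ∃ e : Basis (Fin 6) ℝ L,
    ⁅e 0, e 1⁆ = e 3 ∧ ⁅e 0, e 3⁆ = e 4 ∧ ⁅e 1, e 3⁆ = e 5 ∧
    ∀ i j : Fin 6, i < j →
      ¬(i = 0 ∧ j = 1) → ¬(i = 0 ∧ j = 3) → ¬(i = 1 ∧ j = 3) → ⁅e i, e j⁆ = 0

/-- A Hermitian almost abelian Lie algebra `𝔤(a,v,A)` of dimension `2n ≥ 6`:
a Hermitian structure `(J,g)` together with an orthogonal decomposition
`𝔤 = ℝe₁ ⊕ 𝔫₁ ⊕ ℝe₂ₙ`, with `𝔫 = ℝe₁ ⊕ 𝔫₁` an abelian ideal of codimension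
one, `Je₁ = e₂ₙ`, `J(𝔫₁) ⊆ 𝔫₁`, brackets `[e₂ₙ,e₁] = a•e₁ + v`,
`[e₂ₙ,X] = AX` for `X ∈ 𝔫₁`, where `A` preserves `𝔫₁` and commutes with
`J₁ = J|𝔫₁`, and `At` is the adjoint of `A` on `𝔫₁` with respect to `g`. -/
structure AlmostAbelianHermitian (L : Type*) [LieRing L] [LieAlgebra ℝ L] where
  J : L →ₗ[ℝ] L
  g : L →ₗ[ℝ] L →ₗ[ℝ] ℝ
  e1 : L
  e2n : L
  n1 : Submodule ℝ L
  a : ℝ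
  v : L
  A : L →ₗ[ℝ] L
  At : L →ₗ[ℝ] L
  herm : IsHermitianStructure J g
  hdim : ∃ n : ℕ, 3 ≤ n ∧ Module.finrank ℝ L = 2 * n
  hv : v ∈ n1
  hJe1 : J e1 = e2n
  hJn1 : ∀ x ∈ n1, J x ∈ n1
  hge1 : g e1 e1 = 1
  hge2n : g e2n e2n = 1
  hge1e2n : g e1 e2n = 0
  hge1n1 : ∀ x ∈ n1, g e1 x = 0
  hge2nn1 : ∀ x ∈ n1, g e2n x = 0
  hspan : ∀ x : L, ∃ (c1 c2 : ℝ), ∃ y ∈ n1, x = c1 • e1 + y + c2 • e2n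
  habel1 : ∀ x ∈ n1, ⁅e1, x⁆ = 0
  habel2 : ∀ x ∈ n1, ∀ y ∈ n1, ⁅x, y⁆ = 0
  hbra1 : ⁅e2n, e1⁆ = a • e1 + v
  hbra2 : ∀ x ∈ n1, ⁅e2n, x⁆ = A x
  hAn1 : ∀ x ∈ n1, A x ∈ n1
  hAtn1 : ∀ x ∈ n1, At x ∈ n1
  hAJ : ∀ x ∈ n1, A (J x) = J (A x)
  hAdj : ∀ x ∈ n1, ∀ y ∈ n1, g (A x) y = g x (At y)

namespace AlmostAbelianHermitian

variable {L : Type*} [LieRing L] [LieAlgebra ℝ L] (D : AlmostAbelianHermitian L)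

/-- The symmetric part `S(A) = (A + Aᵗ)/2` of `A`, as a map. -/
noncomputable def SA (x : L) : L := (1/2 : ℝ) • (D.A x + D.At x)

/-- The symmetric part `S(cA + A² + AᵗA)` of `cA + A² + AᵗA`, as a map
(its adjoint being `cAᵗ + (Aᵗ)² + AᵗA`). -/
noncomputable def SM (c : ℝ) (x : L) : L :=
  (1/2 : ℝ) • (c • (D.A x + D.At x) + D.A (D.A x) + D.At (D.At x)
    + (2 : ℝ) • D.At (D.A x))

/-- The restriction of `A` to an endomorphism of `𝔫₁`. -/
def Arestrict : D.n1 →ₗ[ℝ] D.n1 :=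
  D.A.restrict (fun x hx => D.hAn1 x hx)

end AlmostAbelianHermitian

section AAHGenAux

variable {L : Type*} [LieRing L] [LieAlgebra ℝ L] (J : L →ₗ[ℝ] L) (g : L →ₗ[ℝ] L →ₗ[ℝ] ℝ)

lemma aahH_add1 (X X' Y Z : L) : bismutH J g (X + X') Y Z = bismutH J g X Y Z + bismutH J g X' Y Z := by
  simp only [bismutH, map_add, add_lie, lie_add, LinearMap.add_apply]; ring
lemma aahH_add2 (X Y Y' Z : L) : bismutH J g X (Y + Y') Z = bismutH J g X Y Z + bismutH J g X Y' Z := by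
  simp only [bismutH, map_add, add_lie, lie_add, LinearMap.add_apply]; ring
lemma aahH_add3 (X Y Z Z' : L) : bismutH J g X Y (Z + Z') = bismutH J g X Y Z + bismutH J g X Y Z' := by
  simp only [bismutH, map_add, add_lie, lie_add, LinearMap.add_apply]; ring
lemma aahH_smul1 (c : ℝ) (X Y Z : L) : bismutH J g (c • X) Y Z = c * bismutH J g X Y Z := by
  simp only [bismutH, map_smul, smul_lie, lie_smul, LinearMap.smul_apply, smul_eq_mul]; ring
lemma aahH_smul2 (c : ℝ) (X Y Z : L) : bismutH J g X (c • Y) Z = c * bismutH J g X Y Z := by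
  simp only [bismutH, map_smul, smul_lie, lie_smul, LinearMap.smul_apply, smul_eq_mul]; ring
lemma aahH_smul3 (c : ℝ) (X Y Z : L) : bismutH J g X Y (c • Z) = c * bismutH J g X Y Z := by
  simp only [bismutH, map_smul, smul_lie, lie_smul, LinearMap.smul_apply, smul_eq_mul]; ring
lemma aahH_neg1 (X Y Z : L) : bismutH J g (-X) Y Z = -bismutH J g X Y Z := by
  simp only [bismutH, map_neg, neg_lie, lie_neg, LinearMap.neg_apply]; ring
lemma aahH_zero1 (Y Z : L) : bismutH J g 0 Y Z = 0 := by
  simp [bismutH]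
lemma aahH_sw12 (X Y Z : L) : bismutH J g X Y Z = -bismutH J g Y X Z := by
  have h1 : ⁅J Y, J X⁆ = -⁅J X, J Y⁆ := by rw [lie_skew]
  have h2 : ⁅J X, J Z⁆ = -⁅J Z, J X⁆ := by rw [lie_skew]
  have h3 : ⁅J Z, J Y⁆ = -⁅J Y, J Z⁆ := by rw [lie_skew]
  simp only [bismutH, h1, h2, h3, map_neg, LinearMap.neg_apply]; ring
lemma aahH_sw23 (X Y Z : L) : bismutH J g X Y Z = -bismutH J g X Z Y := by
  have h1 : ⁅J X, J Z⁆ = -⁅J Z, J X⁆ := by rw [lie_skew]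
  have h2 : ⁅J Z, J Y⁆ = -⁅J Y, J Z⁆ := by rw [lie_skew]
  have h3 : ⁅J Y, J X⁆ = -⁅J X, J Y⁆ := by rw [lie_skew]
  simp only [bismutH, h1, h2, h3, map_neg, LinearMap.neg_apply]; ring

lemma aahd3_add1 (W W' X Y Z : L) : dThree (bismutH J g) (W + W') X Y Z
    = dThree (bismutH J g) W X Y Z + dThree (bismutH J g) W' X Y Z := by
  simp only [dThree, add_lie, lie_add, aahH_add1, aahH_add2, aahH_add3]; ring
lemma aahd3_add2 (W X X' Y Z : L) : dThree (bismutH J g) W (X + X') Y Z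
    = dThree (bismutH J g) W X Y Z + dThree (bismutH J g) W X' Y Z := by
  simp only [dThree, add_lie, lie_add, aahH_add1, aahH_add2, aahH_add3]; ring
lemma aahd3_add3 (W X Y Y' Z : L) : dThree (bismutH J g) W X (Y + Y') Z
    = dThree (bismutH J g) W X Y Z + dThree (bismutH J g) W X Y' Z := by
  simp only [dThree, add_lie, lie_add, aahH_add1, aahH_add2, aahH_add3]; ring
lemma aahd3_add4 (W X Y Z Z' : L) : dThree (bismutH J g) W X Y (Z + Z')
    = dThree (bismutH J g) W X Y Z + dThree (bismutH J g) W X Y Z' := by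
  simp only [dThree, add_lie, lie_add, aahH_add1, aahH_add2, aahH_add3]; ring
lemma aahd3_smul1 (c : ℝ) (W X Y Z : L) : dThree (bismutH J g) (c • W) X Y Z
    = c * dThree (bismutH J g) W X Y Z := by
  simp only [dThree, smul_lie, lie_smul, aahH_smul1, aahH_smul2, aahH_smul3]; ring
lemma aahd3_smul2 (c : ℝ) (W X Y Z : L) : dThree (bismutH J g) W (c • X) Y Z
    = c * dThree (bismutH J g) W X Y Z := by
  simp only [dThree, smul_lie, lie_smul, aahH_smul1, aahH_smul2, aahH_smul3]; ring
lemma aahd3_smul3 (c : ℝ) (W X Y Z : L) : dThree (bismutH J g) W X (c • Y) Z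
    = c * dThree (bismutH J g) W X Y Z := by
  simp only [dThree, smul_lie, lie_smul, aahH_smul1, aahH_smul2, aahH_smul3]; ring
lemma aahd3_smul4 (c : ℝ) (W X Y Z : L) : dThree (bismutH J g) W X Y (c • Z)
    = c * dThree (bismutH J g) W X Y Z := by
  simp only [dThree, smul_lie, lie_smul, aahH_smul1, aahH_smul2, aahH_smul3]; ring

variable (al : Module.Dual ℝ L)

lemma aahw_add1 (W W' X Y Z : L) : wedgeOneThree al (bismutH J g) (W + W') X Y Z
    = wedgeOneThree al (bismutH J g) W X Y Z + wedgeOneThree al (bismutH J g) W' X Y Z := by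
  simp only [wedgeOneThree, map_add, aahH_add1, aahH_add2, aahH_add3]; ring
lemma aahw_add2 (W X X' Y Z : L) : wedgeOneThree al (bismutH J g) W (X + X') Y Z
    = wedgeOneThree al (bismutH J g) W X Y Z + wedgeOneThree al (bismutH J g) W X' Y Z := by
  simp only [wedgeOneThree, map_add, aahH_add1, aahH_add2, aahH_add3]; ring
lemma aahw_add3 (W X Y Y' Z : L) : wedgeOneThree al (bismutH J g) W X (Y + Y') Z
    = wedgeOneThree al (bismutH J g) W X Y Z + wedgeOneThree al (bismutH J g) W X Y' Z := by
  simp only [wedgeOneThree, map_add, aahH_add1, aahH_add2, aahH_add3]; ring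
lemma aahw_add4 (W X Y Z Z' : L) : wedgeOneThree al (bismutH J g) W X Y (Z + Z')
    = wedgeOneThree al (bismutH J g) W X Y Z + wedgeOneThree al (bismutH J g) W X Y Z' := by
  simp only [wedgeOneThree, map_add, aahH_add1, aahH_add2, aahH_add3]; ring
lemma aahw_smul1 (c : ℝ) (W X Y Z : L) : wedgeOneThree al (bismutH J g) (c • W) X Y Z
    = c * wedgeOneThree al (bismutH J g) W X Y Z := by
  simp only [wedgeOneThree, map_smul, smul_eq_mul, aahH_smul1, aahH_smul2, aahH_smul3]; ring
lemma aahw_smul2 (c : ℝ) (W X Y Z : L) : wedgeOneThree al (bismutH J g) W (c • X) Y Z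
    = c * wedgeOneThree al (bismutH J g) W X Y Z := by
  simp only [wedgeOneThree, map_smul, smul_eq_mul, aahH_smul1, aahH_smul2, aahH_smul3]; ring
lemma aahw_smul3 (c : ℝ) (W X Y Z : L) : wedgeOneThree al (bismutH J g) W X (c • Y) Z
    = c * wedgeOneThree al (bismutH J g) W X Y Z := by
  simp only [wedgeOneThree, map_smul, smul_eq_mul, aahH_smul1, aahH_smul2, aahH_smul3]; ring
lemma aahw_smul4 (c : ℝ) (W X Y Z : L) : wedgeOneThree al (bismutH J g) W X Y (c • Z)
    = c * wedgeOneThree al (bismutH J g) W X Y Z := by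
  simp only [wedgeOneThree, map_smul, smul_eq_mul, aahH_smul1, aahH_smul2, aahH_smul3]; ring

lemma aahd3_sw12 (W X Y Z : L) : dThree (bismutH J g) W X Y Z = -dThree (bismutH J g) X W Y Z := by
  have h : ⁅X, W⁆ = -⁅W, X⁆ := by rw [lie_skew]
  simp only [dThree, h, aahH_neg1, aahH_sw23 J g ⁅Y, Z⁆ X W]; ring
lemma aahd3_sw23 (W X Y Z : L) : dThree (bismutH J g) W X Y Z = -dThree (bismutH J g) W Y X Z := by
  have h : ⁅Y, X⁆ = -⁅X, Y⁆ := by rw [lie_skew]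
  simp only [dThree, h, aahH_neg1, aahH_sw23 J g ⁅W, Z⁆ Y X]; ring
lemma aahd3_sw34 (W X Y Z : L) : dThree (bismutH J g) W X Y Z = -dThree (bismutH J g) W X Z Y := by
  have h : ⁅Z, Y⁆ = -⁅Y, Z⁆ := by rw [lie_skew]
  simp only [dThree, h, aahH_neg1, aahH_sw23 J g ⁅W, X⁆ Z Y]; ring
lemma aahw_sw12 (W X Y Z : L) : wedgeOneThree al (bismutH J g) W X Y Z = -wedgeOneThree al (bismutH J g) X W Y Z := by
  simp only [wedgeOneThree, aahH_sw12 J g X W Z, aahH_sw12 J g X W Y]; ring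
lemma aahw_sw23 (W X Y Z : L) : wedgeOneThree al (bismutH J g) W X Y Z = -wedgeOneThree al (bismutH J g) W Y X Z := by
  simp only [wedgeOneThree, aahH_sw12 J g Y X Z, aahH_sw23 J g W Y X]; ring
lemma aahw_sw34 (W X Y Z : L) : wedgeOneThree al (bismutH J g) W X Y Z = -wedgeOneThree al (bismutH J g) W X Z Y := by
  simp only [wedgeOneThree, aahH_sw23 J g X Z Y, aahH_sw23 J g W Z Y]; ring

lemma aahd3_rep12 (u Y Z : L) : dThree (bismutH J g) u u Y Z = 0 := by
  have h := aahd3_sw12 J g u u Y Z; linarith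
lemma aahd3_rep13 (u X Z : L) : dThree (bismutH J g) u X u Z = 0 := by
  rw [aahd3_sw23, aahd3_rep12, neg_zero]
lemma aahd3_rep14 (u X Y : L) : dThree (bismutH J g) u X Y u = 0 := by
  rw [aahd3_sw34, aahd3_rep13, neg_zero]
lemma aahd3_rep23 (W u Z : L) : dThree (bismutH J g) W u u Z = 0 := by
  rw [aahd3_sw12, aahd3_rep13, neg_zero]
lemma aahd3_rep24 (W u Y : L) : dThree (bismutH J g) W u Y u = 0 := by
  rw [aahd3_sw34, aahd3_rep23, neg_zero]
lemma aahd3_rep34 (W X u : L) : dThree (bismutH J g) W X u u = 0 := by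
  have h := aahd3_sw34 J g W X u u; linarith
lemma aahw_rep12 (u Y Z : L) : wedgeOneThree al (bismutH J g) u u Y Z = 0 := by
  have h := aahw_sw12 J g al u u Y Z; linarith
lemma aahw_rep13 (u X Z : L) : wedgeOneThree al (bismutH J g) u X u Z = 0 := by
  rw [aahw_sw23, aahw_rep12, neg_zero]
lemma aahw_rep14 (u X Y : L) : wedgeOneThree al (bismutH J g) u X Y u = 0 := by
  rw [aahw_sw34, aahw_rep13, neg_zero]
lemma aahw_rep23 (W u Z : L) : wedgeOneThree al (bismutH J g) W u u Z = 0 := by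
  rw [aahw_sw12, aahw_rep13, neg_zero]
lemma aahw_rep24 (W u Y : L) : wedgeOneThree al (bismutH J g) W u Y u = 0 := by
  rw [aahw_sw34, aahw_rep23, neg_zero]
lemma aahw_rep34 (W X u : L) : wedgeOneThree al (bismutH J g) W X u u = 0 := by
  have h := aahw_sw34 J g al W X u u; linarith

lemma aaheqR12 (u Y Z : L) : dThree (bismutH J g) u u Y Z = wedgeOneThree al (bismutH J g) u u Y Z := by
  rw [aahd3_rep12, aahw_rep12]
lemma aaheqR13 (u X Z : L) : dThree (bismutH J g) u X u Z = wedgeOneThree al (bismutH J g) u X u Z := by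
  rw [aahd3_rep13, aahw_rep13]
lemma aaheqR14 (u X Y : L) : dThree (bismutH J g) u X Y u = wedgeOneThree al (bismutH J g) u X Y u := by
  rw [aahd3_rep14, aahw_rep14]
lemma aaheqR23 (W u Z : L) : dThree (bismutH J g) W u u Z = wedgeOneThree al (bismutH J g) W u u Z := by
  rw [aahd3_rep23, aahw_rep23]
lemma aaheqR24 (W u Y : L) : dThree (bismutH J g) W u Y u = wedgeOneThree al (bismutH J g) W u Y u := by
  rw [aahd3_rep24, aahw_rep24]
lemma aaheqR34 (W X u : L) : dThree (bismutH J g) W X u u = wedgeOneThree al (bismutH J g) W X u u := by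
  rw [aahd3_rep34, aahw_rep34]

end AAHGenAux

section AAHAux
variable {L : Type*} [LieRing L] [LieAlgebra ℝ L] (D : AlmostAbelianHermitian L)

lemma aahJ2 (u : L) : D.J (D.J u) = -u := D.herm.1.1 u
lemma aahgsym (u w : L) : D.g u w = D.g w u := D.herm.2.1 u w
lemma aahgJJ (u w : L) : D.g (D.J u) (D.J w) = D.g u w := D.herm.2.2.2 u w
lemma aahJe2n : D.J D.e2n = -D.e1 := by rw [← D.hJe1, aahJ2]
lemma aahgJskew (u w : L) : D.g (D.J u) w = -(D.g u (D.J w)) := by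
  have h := aahgJJ D u (D.J w)
  rw [aahJ2, map_neg] at h
  linarith
lemma aahbr2 (x : L) (hx : x ∈ D.n1) : ⁅x, D.e1⁆ = 0 := by
  rw [← lie_skew, D.habel1 x hx, neg_zero]
lemma aahbr7 (x : L) (hx : x ∈ D.n1) : ⁅x, D.e2n⁆ = -(D.A x) := by
  rw [← lie_skew, D.hbra2 x hx]

lemma aahHnnn (x y z : L) (hx : x ∈ D.n1) (hy : y ∈ D.n1) (hz : z ∈ D.n1) :
    bismutH D.J D.g x y z = 0 := by
  simp [bismutH, D.habel2 _ (D.hJn1 x hx) _ (D.hJn1 y hy),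
    D.habel2 _ (D.hJn1 y hy) _ (D.hJn1 z hz), D.habel2 _ (D.hJn1 z hz) _ (D.hJn1 x hx)]
lemma aahH1nn (y z : L) (hy : y ∈ D.n1) (hz : z ∈ D.n1) :
    bismutH D.J D.g D.e1 y z = -(D.g (D.A (D.J y)) z) + D.g (D.A (D.J z)) y := by
  have hJy := D.hJn1 y hy; have hJz := D.hJn1 z hz
  simp only [bismutH, D.hJe1, D.hbra2 _ hJy, D.habel2 _ hJy _ hJz, aahbr7 D _ hJz,
    map_zero, LinearMap.zero_apply, map_neg, LinearMap.neg_apply]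
  ring
lemma aahHn1n (x z : L) (hx : x ∈ D.n1) (hz : z ∈ D.n1) :
    bismutH D.J D.g x D.e1 z = D.g (D.A (D.J x)) z - D.g (D.A (D.J z)) x := by
  rw [aahH_sw12 D.J D.g x D.e1 z, aahH1nn D x z hx hz]; ring
lemma aahH2nn (y z : L) (hy : y ∈ D.n1) (hz : z ∈ D.n1) :
    bismutH D.J D.g D.e2n y z = 0 := by
  have hJy := D.hJn1 y hy; have hJz := D.hJn1 z hz
  simp [bismutH, aahJe2n D, neg_lie, lie_neg, D.habel1 _ hJy, aahbr2 D _ hJz,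
    D.habel2 _ hJy _ hJz]

variable (al : Module.Dual ℝ L)

lemma aahkeyid (hn : ∀ x ∈ D.n1, al x = 0) (y z : L) (hy : y ∈ D.n1) (hz : z ∈ D.n1) :
    dThree (bismutH D.J D.g) D.e2n D.e1 y z - wedgeOneThree al (bismutH D.J D.g) D.e2n D.e1 y z
      = D.g ((D.a + al D.e2n) • D.A (D.J y) + D.A (D.A (D.J y)) + D.At (D.A (D.J y))) z
        + D.g (D.J y) ((D.a + al D.e2n) • D.A z + D.A (D.A z) + D.At (D.A z)) := by
  have hJy := D.hJn1 y hy; have hJz := D.hJn1 z hz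
  have hd : dThree (bismutH D.J D.g) D.e2n D.e1 y z
      = -(D.a * (-(D.g (D.A (D.J y)) z) + D.g (D.A (D.J z)) y))
        + (D.g (D.A (D.J (D.A y))) z - D.g (D.A (D.J z)) (D.A y))
        - (D.g (D.A (D.J (D.A z))) y - D.g (D.A (D.J y)) (D.A z)) := by
    simp only [dThree, D.hbra1, D.hbra2 y hy, D.hbra2 z hz, D.habel1 y hy, D.habel1 z hz,
      D.habel2 y hy z hz, aahH_zero1, aahH_add1, aahH_smul1]
    rw [aahH1nn D y z hy hz, aahHnnn D D.v y z D.hv hy hz,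
      aahHn1n D (D.A y) z (D.hAn1 y hy) hz, aahHn1n D (D.A z) y (D.hAn1 z hz) hy]
    ring
  have hw : wedgeOneThree al (bismutH D.J D.g) D.e2n D.e1 y z
      = al D.e2n * (-(D.g (D.A (D.J y)) z) + D.g (D.A (D.J z)) y) := by
    simp only [wedgeOneThree, hn y hy, hn z hz, aahH2nn D y z hy hz, aahH1nn D y z hy hz]
    ring
  rw [hd, hw]
  have E1 : D.g (D.A (D.J z)) y = -(D.g (D.J y) (D.A z)) := by
    rw [D.hAJ z hz, aahgJskew D (D.A z) y, aahgsym D (D.A z) (D.J y)]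
  have E2 : D.A (D.J (D.A y)) = D.A (D.A (D.J y)) := by rw [← D.hAJ y hy]
  have E3 : D.g (D.A (D.J z)) (D.A y) = -(D.g (D.At (D.A (D.J y))) z) := by
    rw [D.hAJ z hz, aahgJskew D (D.A z) (D.A y), ← D.hAJ y hy,
      D.hAdj z hz (D.A (D.J y)) (D.hAn1 _ (D.hJn1 y hy)), aahgsym D z]
  have E4 : D.g (D.A (D.J (D.A z))) y = -(D.g (D.J y) (D.A (D.A z))) := by
    rw [D.hAJ (D.A z) (D.hAn1 z hz), aahgJskew D (D.A (D.A z)) y,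
      aahgsym D (D.A (D.A z)) (D.J y)]
  have E5 : D.g (D.A (D.J y)) (D.A z) = D.g (D.J y) (D.At (D.A z)) :=
    D.hAdj (D.J y) (D.hJn1 y hy) (D.A z) (D.hAn1 z hz)
  rw [E1, E2, E3, E4, E5]
  simp only [map_add, map_smul, LinearMap.add_apply, LinearMap.smul_apply, smul_eq_mul]
  ring

lemma aaheqA (x y z w : L) (hx : x ∈ D.n1) (hy : y ∈ D.n1) (hz : z ∈ D.n1) (hw : w ∈ D.n1) :
    dThree (bismutH D.J D.g) x y z w = wedgeOneThree al (bismutH D.J D.g) x y z w := by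
  simp [dThree, wedgeOneThree, D.habel2 x hx y hy, D.habel2 x hx z hz, D.habel2 x hx w hw,
    D.habel2 y hy z hz, D.habel2 y hy w hw, D.habel2 z hz w hw, aahH_zero1,
    aahHnnn D y z w hy hz hw, aahHnnn D x z w hx hz hw, aahHnnn D x y w hx hy hw,
    aahHnnn D x y z hx hy hz]

lemma aaheqB1 (hn : ∀ x ∈ D.n1, al x = 0) (x y z : L)
    (hx : x ∈ D.n1) (hy : y ∈ D.n1) (hz : z ∈ D.n1) :
    dThree (bismutH D.J D.g) D.e1 x y z = wedgeOneThree al (bismutH D.J D.g) D.e1 x y z := by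
  simp [dThree, wedgeOneThree, D.habel1 x hx, D.habel1 y hy, D.habel1 z hz,
    D.habel2 x hx y hy, D.habel2 x hx z hz, D.habel2 y hy z hz, aahH_zero1,
    hn x hx, hn y hy, hn z hz, aahHnnn D x y z hx hy hz]
lemma aaheqB2 (hn : ∀ x ∈ D.n1, al x = 0) (x y z : L)
    (hx : x ∈ D.n1) (hy : y ∈ D.n1) (hz : z ∈ D.n1) :
    dThree (bismutH D.J D.g) x D.e1 y z = wedgeOneThree al (bismutH D.J D.g) x D.e1 y z := by
  rw [aahd3_sw12, aahw_sw12, aaheqB1 D al hn x y z hx hy hz]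
lemma aaheqB3 (hn : ∀ x ∈ D.n1, al x = 0) (x y z : L)
    (hx : x ∈ D.n1) (hy : y ∈ D.n1) (hz : z ∈ D.n1) :
    dThree (bismutH D.J D.g) x y D.e1 z = wedgeOneThree al (bismutH D.J D.g) x y D.e1 z := by
  rw [aahd3_sw23, aahw_sw23, aaheqB2 D al hn x y z hx hy hz]
lemma aaheqB4 (hn : ∀ x ∈ D.n1, al x = 0) (x y z : L)
    (hx : x ∈ D.n1) (hy : y ∈ D.n1) (hz : z ∈ D.n1) :
    dThree (bismutH D.J D.g) x y z D.e1 = wedgeOneThree al (bismutH D.J D.g) x y z D.e1 := by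
  rw [aahd3_sw34, aahw_sw34, aaheqB3 D al hn x y z hx hy hz]

lemma aaheqC1 (x y z : L) (hx : x ∈ D.n1) (hy : y ∈ D.n1) (hz : z ∈ D.n1) :
    dThree (bismutH D.J D.g) D.e2n x y z = wedgeOneThree al (bismutH D.J D.g) D.e2n x y z := by
  simp [dThree, wedgeOneThree, D.hbra2 x hx, D.hbra2 y hy, D.hbra2 z hz,
    D.habel2 x hx y hy, D.habel2 x hx z hz, D.habel2 y hy z hz, aahH_zero1,
    aahHnnn D (D.A x) y z (D.hAn1 x hx) hy hz, aahHnnn D (D.A y) x z (D.hAn1 y hy) hx hz,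
    aahHnnn D (D.A z) x y (D.hAn1 z hz) hx hy, aahHnnn D x y z hx hy hz,
    aahH2nn D y z hy hz, aahH2nn D x z hx hz, aahH2nn D x y hx hy]
lemma aaheqC2 (x y z : L) (hx : x ∈ D.n1) (hy : y ∈ D.n1) (hz : z ∈ D.n1) :
    dThree (bismutH D.J D.g) x D.e2n y z = wedgeOneThree al (bismutH D.J D.g) x D.e2n y z := by
  rw [aahd3_sw12, aahw_sw12, aaheqC1 D al x y z hx hy hz]
lemma aaheqC3 (x y z : L) (hx : x ∈ D.n1) (hy : y ∈ D.n1) (hz : z ∈ D.n1) :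
    dThree (bismutH D.J D.g) x y D.e2n z = wedgeOneThree al (bismutH D.J D.g) x y D.e2n z := by
  rw [aahd3_sw23, aahw_sw23, aaheqC2 D al x y z hx hy hz]
lemma aaheqC4 (x y z : L) (hx : x ∈ D.n1) (hy : y ∈ D.n1) (hz : z ∈ D.n1) :
    dThree (bismutH D.J D.g) x y z D.e2n = wedgeOneThree al (bismutH D.J D.g) x y z D.e2n := by
  rw [aahd3_sw34, aahw_sw34, aaheqC3 D al x y z hx hy hz]

section Dlemmas
variable (hn : ∀ x ∈ D.n1, al x = 0)
  (hsk : ∀ x ∈ D.n1, ∀ y ∈ D.n1,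
    D.g ((D.a + al D.e2n) • D.A x + D.A (D.A x) + D.At (D.A x)) y
      = - D.g x ((D.a + al D.e2n) • D.A y + D.A (D.A y) + D.At (D.A y)))

include hn hsk

lemma aaheqD12 (y z : L) (hy : y ∈ D.n1) (hz : z ∈ D.n1) :
    dThree (bismutH D.J D.g) D.e2n D.e1 y z = wedgeOneThree al (bismutH D.J D.g) D.e2n D.e1 y z := by
  have hk := aahkeyid D al hn y z hy hz
  have hs := hsk (D.J y) (D.hJn1 y hy) z hz
  linarith
lemma aaheqD21 (y z : L) (hy : y ∈ D.n1) (hz : z ∈ D.n1) :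
    dThree (bismutH D.J D.g) D.e1 D.e2n y z = wedgeOneThree al (bismutH D.J D.g) D.e1 D.e2n y z := by
  rw [aahd3_sw12, aahw_sw12, aaheqD12 D al hn hsk y z hy hz]
lemma aaheqD13 (y z : L) (hy : y ∈ D.n1) (hz : z ∈ D.n1) :
    dThree (bismutH D.J D.g) D.e2n y D.e1 z = wedgeOneThree al (bismutH D.J D.g) D.e2n y D.e1 z := by
  rw [aahd3_sw23, aahw_sw23, aaheqD12 D al hn hsk y z hy hz]
lemma aaheqD14 (y z : L) (hy : y ∈ D.n1) (hz : z ∈ D.n1) :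
    dThree (bismutH D.J D.g) D.e2n y z D.e1 = wedgeOneThree al (bismutH D.J D.g) D.e2n y z D.e1 := by
  rw [aahd3_sw34, aahw_sw34, aaheqD13 D al hn hsk y z hy hz]
lemma aaheqD23 (y z : L) (hy : y ∈ D.n1) (hz : z ∈ D.n1) :
    dThree (bismutH D.J D.g) y D.e2n D.e1 z = wedgeOneThree al (bismutH D.J D.g) y D.e2n D.e1 z := by
  rw [aahd3_sw12, aahw_sw12, aaheqD13 D al hn hsk y z hy hz]
lemma aaheqD24 (y z : L) (hy : y ∈ D.n1) (hz : z ∈ D.n1) :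
    dThree (bismutH D.J D.g) y D.e2n z D.e1 = wedgeOneThree al (bismutH D.J D.g) y D.e2n z D.e1 := by
  rw [aahd3_sw12, aahw_sw12, aaheqD14 D al hn hsk y z hy hz]
lemma aaheqD31 (y z : L) (hy : y ∈ D.n1) (hz : z ∈ D.n1) :
    dThree (bismutH D.J D.g) D.e1 y D.e2n z = wedgeOneThree al (bismutH D.J D.g) D.e1 y D.e2n z := by
  rw [aahd3_sw23, aahw_sw23, aaheqD21 D al hn hsk y z hy hz]
lemma aaheqD41 (y z : L) (hy : y ∈ D.n1) (hz : z ∈ D.n1) :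
    dThree (bismutH D.J D.g) D.e1 y z D.e2n = wedgeOneThree al (bismutH D.J D.g) D.e1 y z D.e2n := by
  rw [aahd3_sw34, aahw_sw34, aaheqD31 D al hn hsk y z hy hz]
lemma aaheqD32 (y z : L) (hy : y ∈ D.n1) (hz : z ∈ D.n1) :
    dThree (bismutH D.J D.g) y D.e1 D.e2n z = wedgeOneThree al (bismutH D.J D.g) y D.e1 D.e2n z := by
  rw [aahd3_sw23, aahw_sw23, aaheqD23 D al hn hsk y z hy hz]
lemma aaheqD42 (y z : L) (hy : y ∈ D.n1) (hz : z ∈ D.n1) :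
    dThree (bismutH D.J D.g) y D.e1 z D.e2n = wedgeOneThree al (bismutH D.J D.g) y D.e1 z D.e2n := by
  rw [aahd3_sw34, aahw_sw34, aaheqD32 D al hn hsk y z hy hz]
lemma aaheqD34 (y z : L) (hy : y ∈ D.n1) (hz : z ∈ D.n1) :
    dThree (bismutH D.J D.g) y z D.e2n D.e1 = wedgeOneThree al (bismutH D.J D.g) y z D.e2n D.e1 := by
  rw [aahd3_sw23, aahw_sw23, aaheqD24 D al hn hsk y z hy hz]
lemma aaheqD43 (y z : L) (hy : y ∈ D.n1) (hz : z ∈ D.n1) :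
    dThree (bismutH D.J D.g) y z D.e1 D.e2n = wedgeOneThree al (bismutH D.J D.g) y z D.e1 D.e2n := by
  rw [aahd3_sw23, aahw_sw23, aaheqD42 D al hn hsk y z hy hz]

end Dlemmas
end AAHAux


set_option maxHeartbeats 1000000 in
/-- For a Hermitian almost abelian Lie algebra `𝔤(a,v,A)`
with `A` invertible and `α` a nonzero closed 1-form, `dH = α ∧ H` holds iff
`α` vanishes on `𝔫₁`, `a·α(e₁) = 0`, and `(a + α(e₂ₙ))A + A² + AᵗA` is
skew-adjoint with respect to `g`. -/
theorem almostAbelian_lcskt_iff_of_invertible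
    (L : Type*) [LieRing L] [LieAlgebra ℝ L] (D : AlmostAbelianHermitian L)
    (hA : Function.Bijective D.Arestrict)
    (α : Module.Dual ℝ L) (hα : α ≠ 0) (hcl : IsClosedOneForm α) :
    (∀ W X Y Z : L,
        dThree (bismutH D.J D.g) W X Y Z = wedgeOneThree α (bismutH D.J D.g) W X Y Z)
      ↔
      ((∀ x ∈ D.n1, α x = 0) ∧ D.a * α D.e1 = 0 ∧
        ∀ x ∈ D.n1, ∀ y ∈ D.n1,
          D.g ((D.a + α D.e2n) • D.A x + D.A (D.A x) + D.At (D.A x)) y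
            = - D.g x ((D.a + α D.e2n) • D.A y + D.A (D.A y) + D.At (D.A y))) := by
  have hn0 : ∀ x ∈ D.n1, α x = 0 := by
    intro x hx
    obtain ⟨y, hxy⟩ := hA.2 ⟨x, hx⟩
    have h2 : D.A (y : L) = x := by
      have h := congrArg Subtype.val hxy
      rwa [AlmostAbelianHermitian.Arestrict, LinearMap.restrict_coe_apply] at h
    rw [← h2, ← D.hbra2 _ y.2]
    exact hcl D.e2n y
  constructor
  · intro heq
    refine ⟨hn0, ?_, ?_⟩
    · have h := hcl D.e2n D.e1
      rw [D.hbra1, map_add, map_smul, smul_eq_mul, hn0 D.v D.hv] at h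
      linarith
    · intro p hp q hq
      have hy : -(D.J p) ∈ D.n1 := Submodule.neg_mem _ (D.hJn1 p hp)
      have hk := aahkeyid D α hn0 (-(D.J p)) q hy hq
      rw [heq D.e2n D.e1 (-(D.J p)) q, sub_self] at hk
      rw [map_neg, aahJ2, neg_neg] at hk
      linarith
  · rintro ⟨hn, -, hsk⟩
    have key : ∀ W X Y Z : L,
        (W = D.e1 ∨ W = D.e2n ∨ W ∈ D.n1) → (X = D.e1 ∨ X = D.e2n ∨ X ∈ D.n1) →
        (Y = D.e1 ∨ Y = D.e2n ∨ Y ∈ D.n1) → (Z = D.e1 ∨ Z = D.e2n ∨ Z ∈ D.n1) →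
        dThree (bismutH D.J D.g) W X Y Z = wedgeOneThree α (bismutH D.J D.g) W X Y Z := by
      intro W X Y Z hW hX hY hZ
      rcases hW with rfl | rfl | hW <;> rcases hX with rfl | rfl | hX <;>
        rcases hY with rfl | rfl | hY <;> rcases hZ with rfl | rfl | hZ
      · exact aaheqR12 D.J D.g α D.e1 D.e1 D.e1
      · exact aaheqR12 D.J D.g α D.e1 D.e1 D.e2n
      · exact aaheqR12 D.J D.g α D.e1 D.e1 Z
      · exact aaheqR12 D.J D.g α D.e1 D.e2n D.e1
      · exact aaheqR12 D.J D.g α D.e1 D.e2n D.e2n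
      · exact aaheqR12 D.J D.g α D.e1 D.e2n Z
      · exact aaheqR12 D.J D.g α D.e1 Y D.e1
      · exact aaheqR12 D.J D.g α D.e1 Y D.e2n
      · exact aaheqR12 D.J D.g α D.e1 Y Z
      · exact aaheqR13 D.J D.g α D.e1 D.e2n D.e1
      · exact aaheqR13 D.J D.g α D.e1 D.e2n D.e2n
      · exact aaheqR13 D.J D.g α D.e1 D.e2n Z
      · exact aaheqR14 D.J D.g α D.e1 D.e2n D.e2n
      · exact aaheqR23 D.J D.g α D.e1 D.e2n D.e2n
      · exact aaheqR23 D.J D.g α D.e1 D.e2n Z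
      · exact aaheqR14 D.J D.g α D.e1 D.e2n Y
      · exact aaheqR24 D.J D.g α D.e1 D.e2n Y
      · exact aaheqD21 D α hn hsk Y Z hY hZ
      · exact aaheqR13 D.J D.g α D.e1 X D.e1
      · exact aaheqR13 D.J D.g α D.e1 X D.e2n
      · exact aaheqR13 D.J D.g α D.e1 X Z
      · exact aaheqR14 D.J D.g α D.e1 X D.e2n
      · exact aaheqR34 D.J D.g α D.e1 X D.e2n
      · exact aaheqD31 D α hn hsk X Z hX hZ
      · exact aaheqR14 D.J D.g α D.e1 X Y
      · exact aaheqD41 D α hn hsk X Y hX hY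
      · exact aaheqB1 D α hn X Y Z hX hY hZ
      · exact aaheqR23 D.J D.g α D.e2n D.e1 D.e1
      · exact aaheqR14 D.J D.g α D.e2n D.e1 D.e1
      · exact aaheqR23 D.J D.g α D.e2n D.e1 Z
      · exact aaheqR13 D.J D.g α D.e2n D.e1 D.e1
      · exact aaheqR13 D.J D.g α D.e2n D.e1 D.e2n
      · exact aaheqR13 D.J D.g α D.e2n D.e1 Z
      · exact aaheqR24 D.J D.g α D.e2n D.e1 Y
      · exact aaheqR14 D.J D.g α D.e2n D.e1 Y
      · exact aaheqD12 D α hn hsk Y Z hY hZ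
      · exact aaheqR12 D.J D.g α D.e2n D.e1 D.e1
      · exact aaheqR12 D.J D.g α D.e2n D.e1 D.e2n
      · exact aaheqR12 D.J D.g α D.e2n D.e1 Z
      · exact aaheqR12 D.J D.g α D.e2n D.e2n D.e1
      · exact aaheqR12 D.J D.g α D.e2n D.e2n D.e2n
      · exact aaheqR12 D.J D.g α D.e2n D.e2n Z
      · exact aaheqR12 D.J D.g α D.e2n Y D.e1
      · exact aaheqR12 D.J D.g α D.e2n Y D.e2n
      · exact aaheqR12 D.J D.g α D.e2n Y Z
      · exact aaheqR34 D.J D.g α D.e2n X D.e1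
      · exact aaheqR14 D.J D.g α D.e2n X D.e1
      · exact aaheqD13 D α hn hsk X Z hX hZ
      · exact aaheqR13 D.J D.g α D.e2n X D.e1
      · exact aaheqR13 D.J D.g α D.e2n X D.e2n
      · exact aaheqR13 D.J D.g α D.e2n X Z
      · exact aaheqD14 D α hn hsk X Y hX hY
      · exact aaheqR14 D.J D.g α D.e2n X Y
      · exact aaheqC1 D α X Y Z hX hY hZ
      · exact aaheqR23 D.J D.g α W D.e1 D.e1
      · exact aaheqR23 D.J D.g α W D.e1 D.e2n
      · exact aaheqR23 D.J D.g α W D.e1 Z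
      · exact aaheqR24 D.J D.g α W D.e1 D.e2n
      · exact aaheqR34 D.J D.g α W D.e1 D.e2n
      · exact aaheqD32 D α hn hsk W Z hW hZ
      · exact aaheqR24 D.J D.g α W D.e1 Y
      · exact aaheqD42 D α hn hsk W Y hW hY
      · exact aaheqB2 D α hn W Y Z hW hY hZ
      · exact aaheqR34 D.J D.g α W D.e2n D.e1
      · exact aaheqR24 D.J D.g α W D.e2n D.e1
      · exact aaheqD23 D α hn hsk W Z hW hZ
      · exact aaheqR23 D.J D.g α W D.e2n D.e1
      · exact aaheqR23 D.J D.g α W D.e2n D.e2n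
      · exact aaheqR23 D.J D.g α W D.e2n Z
      · exact aaheqD24 D α hn hsk W Y hW hY
      · exact aaheqR24 D.J D.g α W D.e2n Y
      · exact aaheqC2 D α W Y Z hW hY hZ
      · exact aaheqR34 D.J D.g α W X D.e1
      · exact aaheqD43 D α hn hsk W X hW hX
      · exact aaheqB3 D α hn W X Z hW hX hZ
      · exact aaheqD34 D α hn hsk W X hW hX
      · exact aaheqR34 D.J D.g α W X D.e2n
      · exact aaheqC3 D α W X Z hW hX hZ
      · exact aaheqB4 D α hn W X Y hW hX hY
      · exact aaheqC4 D α W X Y hW hX hY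
      · exact aaheqA D α W X Y Z hW hX hY hZ
    have keyZ : ∀ W X Y Z : L,
        (W = D.e1 ∨ W = D.e2n ∨ W ∈ D.n1) → (X = D.e1 ∨ X = D.e2n ∨ X ∈ D.n1) →
        (Y = D.e1 ∨ Y = D.e2n ∨ Y ∈ D.n1) →
        dThree (bismutH D.J D.g) W X Y Z = wedgeOneThree α (bismutH D.J D.g) W X Y Z := by
      intro W X Y Z hW hX hY
      obtain ⟨c1, c2, u, hu, rfl⟩ := D.hspan Z
      rw [aahd3_add4, aahd3_add4, aahd3_smul4, aahd3_smul4,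
        aahw_add4, aahw_add4, aahw_smul4, aahw_smul4,
        key W X Y D.e1 hW hX hY (Or.inl rfl), key W X Y u hW hX hY (Or.inr (Or.inr hu)),
        key W X Y D.e2n hW hX hY (Or.inr (Or.inl rfl))]
    have keyY : ∀ W X Y Z : L,
        (W = D.e1 ∨ W = D.e2n ∨ W ∈ D.n1) → (X = D.e1 ∨ X = D.e2n ∨ X ∈ D.n1) →
        dThree (bismutH D.J D.g) W X Y Z = wedgeOneThree α (bismutH D.J D.g) W X Y Z := by
      intro W X Y Z hW hX
      obtain ⟨c1, c2, u, hu, rfl⟩ := D.hspan Y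
      rw [aahd3_add3, aahd3_add3, aahd3_smul3, aahd3_smul3,
        aahw_add3, aahw_add3, aahw_smul3, aahw_smul3,
        keyZ W X D.e1 Z hW hX (Or.inl rfl), keyZ W X u Z hW hX (Or.inr (Or.inr hu)),
        keyZ W X D.e2n Z hW hX (Or.inr (Or.inl rfl))]
    have keyX : ∀ W X Y Z : L,
        (W = D.e1 ∨ W = D.e2n ∨ W ∈ D.n1) →
        dThree (bismutH D.J D.g) W X Y Z = wedgeOneThree α (bismutH D.J D.g) W X Y Z := by
      intro W X Y Z hW
      obtain ⟨c1, c2, u, hu, rfl⟩ := D.hspan X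
      rw [aahd3_add2, aahd3_add2, aahd3_smul2, aahd3_smul2,
        aahw_add2, aahw_add2, aahw_smul2, aahw_smul2,
        keyY W D.e1 Y Z hW (Or.inl rfl), keyY W u Y Z hW (Or.inr (Or.inr hu)),
        keyY W D.e2n Y Z hW (Or.inr (Or.inl rfl))]
    intro W X Y Z
    obtain ⟨c1, c2, u, hu, rfl⟩ := D.hspan W
    rw [aahd3_add1, aahd3_add1, aahd3_smul1, aahd3_smul1,
      aahw_add1, aahw_add1, aahw_smul1, aahw_smul1,
      keyX D.e1 X Y Z (Or.inl rfl), keyX u X Y Z (Or.inr (Or.inr hu)),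
      keyX D.e2n X Y Z (Or.inr (Or.inl rfl))]
end

section
/- For any real m×m matrix E with eigenvalues k₁, …, k_m ∈ ℂ (the roots of its characteristic polynomial, counted with multiplicity), one has ‖S(E)‖² ≥ Σᵢ₌₁^m Re(kᵢ)², with equality if and only if E is normal. -/
open Matrix Polynomial


lemma schur_aux : ∀ (n : ℕ) (A : Matrix (Fin n) (Fin n) ℂ),
    ∃ U : Matrix (Fin n) (Fin n) ℂ, star U * U = 1 ∧
      ∀ i j : Fin n, j < i → (star U * A * U) i j = 0 := by
  intro n
  induction n with
  | zero =>
    intro A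
    exact ⟨1, by simp, fun i => i.elim0⟩
  | succ n IH =>
    intro A
    -- find a unit eigenvector
    obtain ⟨μ, hμ⟩ := Module.End.exists_eigenvalue (Matrix.mulVecLin A)
    obtain ⟨v, hv⟩ := hμ.exists_hasEigenvector
    have hv0 : v ≠ 0 := hv.right
    have hAv : A.mulVec v = μ • v := hv.apply_eq_smul
    set v' : EuclideanSpace ℂ (Fin (n+1)) := (EuclideanSpace.equiv (Fin (n+1)) ℂ).symm v with hv'
    have hv'0 : v' ≠ 0 := fun h => hv0 (by simpa [hv'] using h)
    set c : ℂ := (‖v'‖ : ℂ)⁻¹ with hc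
    set w : EuclideanSpace ℂ (Fin (n+1)) := c • v' with hw
    have hw1 : ‖w‖ = 1 := norm_smul_inv_norm hv'0
    have hwfun : ∀ i, w i = c * v i := fun i => rfl
    have hAw : A.mulVec (fun i => w i) = fun i => μ * w i := by
      funext i
      simp only [hwfun]
      have : A.mulVec (c • v) = c • A.mulVec v := Matrix.mulVec_smul A c v
      calc A.mulVec (fun i => c * v i) i = (c • A.mulVec v) i := by
            rw [← this]; rfl
        _ = μ * (c * v i) := by
            rw [hAv]; simp [smul_smul]; ring
    -- extend to an orthonormal basis
    have hon : Orthonormal ℂ (({0} : Set (Fin (n+1))).restrict (fun _ => w)) := by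
      rw [orthonormal_iff_ite]
      intro i j
      have hij : i = j := Subsingleton.elim i j
      subst hij
      rw [if_pos rfl]; change inner ℂ w w = 1; rw [inner_self_eq_norm_sq_to_K, hw1]
      norm_num
    obtain ⟨b, hb⟩ := hon.exists_orthonormalBasis_extension_of_card_eq
      (by simp [finrank_euclideanSpace]) 
    have hb0 : b 0 = w := hb 0 rfl
    set U₁ : Matrix (Fin (n+1)) (Fin (n+1)) ℂ := Matrix.of (fun i j => (b j) i) with hU₁def
    have hinner : ∀ j k : Fin (n+1), ∑ i, star (U₁ i j) * U₁ i k = if j = k then 1 else 0 := by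
      intro j k
      have := (orthonormal_iff_ite.mp b.orthonormal) j k
      rw [PiLp.inner_apply] at this
      simpa [hU₁def, RCLike.inner_apply, mul_comm] using this
    have hU₁ : star U₁ * U₁ = 1 := by
      ext j k
      rw [Matrix.mul_apply, Matrix.one_apply]
      simpa [Matrix.star_apply] using hinner j k
    have hU₁' : U₁ * star U₁ = 1 := mul_eq_one_comm.mp hU₁
    set B : Matrix (Fin (n+1)) (Fin (n+1)) ℂ := star U₁ * A * U₁ with hBdef
    have hB0 : ∀ i : Fin (n+1), i ≠ 0 → B i 0 = 0 := by
      intro i hi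
      have hAU : ∀ k, (A * U₁) k 0 = μ * w k := by
        intro k
        rw [Matrix.mul_apply]
        have : ∑ l, A k l * U₁ l 0 = A.mulVec (fun i => w i) k := by
          rw [Matrix.mulVec, dotProduct]
          congr 1; funext l
          simp [hU₁def, hb0]
        rw [this, hAw]
      rw [hBdef, Matrix.mul_assoc, Matrix.mul_apply]
      have : ∑ k, (star U₁) i k * (A * U₁) k 0 = μ * ∑ k, star (U₁ k i) * U₁ k 0 := by
        rw [Finset.mul_sum]
        congr 1; funext k
        rw [Matrix.star_apply, hAU k]
        have : U₁ k 0 = w k := by simp [hU₁def, hb0]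
        rw [this]; ring
      rw [this, hinner i 0, if_neg hi, mul_zero]
    -- apply the induction hypothesis to the lower-right block
    obtain ⟨W', hW'1, hW'3⟩ := IH (B.submatrix Fin.succ Fin.succ)
    set W : Matrix (Fin (n+1)) (Fin (n+1)) ℂ :=
      Matrix.of (Fin.cons (Fin.cons 1 0) (fun i' => Fin.cons 0 (W' i'))) with hWdef
    have hW00 : W 0 0 = 1 := rfl
    have hW0s : ∀ j : Fin n, W 0 j.succ = 0 := fun j => by
      show (Fin.cons (1:ℂ) (0 : Fin n → ℂ) : Fin (n+1) → ℂ) j.succ = 0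
      simp
    have hWs0 : ∀ i : Fin n, W i.succ 0 = 0 := fun i => by
      show (Fin.cons (0:ℂ) (W' i) : Fin (n+1) → ℂ) 0 = 0
      simp
    have hWss : ∀ i j : Fin n, W i.succ j.succ = W' i j := fun i j => by
      show (Fin.cons (0:ℂ) (W' i) : Fin (n+1) → ℂ) j.succ = W' i j
      simp
    have hWstar : star W * W = 1 := by
      ext a c
      rw [Matrix.mul_apply, Fin.sum_univ_succ]
      simp only [Matrix.star_apply]
      induction a using Fin.cases with
      | zero =>
        induction c using Fin.cases with
        | zero => simp [hW00, hWs0]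
        | succ c' => simp [hW00, hW0s, hWs0, Matrix.one_apply, (Fin.succ_ne_zero c').symm]
      | succ a' =>
        induction c using Fin.cases with
        | zero => simp [hW00, hW0s, hWs0, Matrix.one_apply, Fin.succ_ne_zero a']
        | succ c' =>
          have := congrFun (congrFun hW'1 a') c'
          rw [Matrix.mul_apply] at this
          simp only [Matrix.star_apply] at this
          simp only [hW0s, hWss, star_zero, zero_mul, zero_add]
          rw [this]
          simp [Matrix.one_apply, Fin.succ_inj]
    set U : Matrix (Fin (n+1)) (Fin (n+1)) ℂ := U₁ * W with hUdef
    have hUstar : star U * U = 1 := by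
      rw [hUdef, Matrix.star_mul, Matrix.mul_assoc, ← Matrix.mul_assoc (star U₁), hU₁,
        Matrix.one_mul]
      · exact hWstar
    have hT : star U * A * U = star W * B * W := by
      rw [hUdef, Matrix.star_mul, hBdef]
      noncomm_ring
    refine ⟨U, hUstar, ?_⟩
    rw [hT]
    -- triangularity
    have hSWB : ∀ (i' : Fin n) (l : Fin (n+1)),
        (star W * B) i'.succ l = ∑ k : Fin n, star (W' k i') * B k.succ l := by
      intro i' l
      rw [Matrix.mul_apply, Fin.sum_univ_succ]
      simp only [Matrix.star_apply, hW0s, hWss, star_zero, zero_mul, zero_add]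
    intro i j hij
    induction i using Fin.cases with
    | zero => exact absurd hij (by simp)
    | succ i' =>
      induction j using Fin.cases with
      | zero =>
        rw [Matrix.mul_apply, Fin.sum_univ_succ]
        rw [hSWB i' 0]
        have h1 : ∑ k : Fin n, star (W' k i') * B k.succ 0 = 0 := by
          apply Finset.sum_eq_zero
          intro k _
          rw [hB0 k.succ (Fin.succ_ne_zero k), mul_zero]
        rw [h1, zero_mul, zero_add]
        apply Finset.sum_eq_zero
        intro l _
        rw [hWs0 l, mul_zero]
      | succ j' =>
        have hij' : j' < i' := by
          simpa [Fin.succ_lt_succ_iff] using hij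
        rw [Matrix.mul_apply, Fin.sum_univ_succ, hW0s j', mul_zero, zero_add]
        have : ∀ l : Fin n, (star W * B) i'.succ l.succ * W l.succ j'.succ
            = (star W' * B.submatrix Fin.succ Fin.succ) i' l * W' l j' := by
          intro l
          rw [hSWB, hWss, Matrix.mul_apply]
          simp only [Matrix.star_apply, Matrix.submatrix_apply]
        calc ∑ l : Fin n, (star W * B) i'.succ l.succ * W l.succ j'.succ
            = ∑ l : Fin n, (star W' * B.submatrix Fin.succ Fin.succ) i' l * W' l j' :=
              Finset.sum_congr rfl (fun l _ => this l)
          _ = (star W' * B.submatrix Fin.succ Fin.succ * W') i' j' := by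
              rw [Matrix.mul_apply]
          _ = 0 := hW'3 i' j' hij'


lemma charpoly_unitary_conj {n : ℕ} (A U : Matrix (Fin n) (Fin n) ℂ)
    (h1 : star U * U = 1) :
    (star U * A * U).charpoly = A.charpoly := by
  set F : Matrix (Fin n) (Fin n) ℂ →+* Matrix (Fin n) (Fin n) ℂ[X] := (C : ℂ →+* ℂ[X]).mapMatrix with hF
  have hs : Matrix.scalar (Fin n) (X : ℂ[X]) * F (star U)
      = F (star U) * Matrix.scalar (Fin n) (X : ℂ[X]) :=
    (Matrix.scalar_commute (X : ℂ[X]) (fun r' => Commute.all _ _) (F (star U))).eq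
  have key : charmatrix (star U * A * U) = F (star U) * charmatrix A * F U := by
    rw [charmatrix, charmatrix, _root_.map_mul, _root_.map_mul, mul_sub, sub_mul]
    congr 1
    rw [← hs, Matrix.mul_assoc, ← _root_.map_mul, h1, _root_.map_one, Matrix.mul_one]
  rw [Matrix.charpoly, Matrix.charpoly, key, Matrix.det_mul, Matrix.det_mul]
  have hdet : (F (star U)).det * (F U).det = 1 := by
    rw [← Matrix.det_mul, ← _root_.map_mul, h1, _root_.map_one, Matrix.det_one]
  calc (F (star U)).det * (charmatrix A).det * (F U).det
      = (charmatrix A).det * ((F (star U)).det * (F U).det) := by ring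
    _ = (charmatrix A).det := by rw [hdet, mul_one]


lemma tri_normal_offdiag_eq_zero {n : ℕ} (T : Matrix (Fin n) (Fin n) ℂ)
    (htri : ∀ i j : Fin n, j < i → T i j = 0)
    (hnorm : T * Tᴴ = Tᴴ * T) :
    ∀ i j : Fin n, i ≠ j → T i j = 0 := by
  have engine : ∀ i : Fin n, (∀ i' : Fin n, (i' : ℕ) < (i : ℕ) → ∀ j, i' ≠ j → T i' j = 0) →
      ∀ j, i ≠ j → T i j = 0 := by
    intro i IH j hij
    have h1 := congrFun (congrFun hnorm i) i
    rw [Matrix.mul_apply, Matrix.mul_apply] at h1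
    have hL : ∑ k, T i k * Tᴴ k i = ((∑ k, Complex.normSq (T i k) : ℝ) : ℂ) := by
      rw [Complex.ofReal_sum]
      apply Finset.sum_congr rfl
      intro k _
      rw [Matrix.conjTranspose_apply, Complex.star_def, Complex.mul_conj]
    have hR : ∑ k, Tᴴ i k * T k i = ((Complex.normSq (T i i) : ℝ) : ℂ) := by
      rw [Finset.sum_eq_single i]
      · rw [Matrix.conjTranspose_apply, Complex.star_def, mul_comm, Complex.mul_conj]
      · intro k _ hk
        have : T k i = 0 := by
          rcases lt_or_gt_of_ne (fun h : k = i => hk h) with h | h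
          · exact IH k (Fin.lt_iff_val_lt_val.mp h) i hk
          · exact htri k i h
        rw [this, mul_zero]
      · intro h; exact absurd (Finset.mem_univ i) h
    rw [hL, hR] at h1
    have h2 : ∑ k, Complex.normSq (T i k) = Complex.normSq (T i i) :=
      Complex.ofReal_inj.mp h1
    have h3 : ∑ k ∈ Finset.univ.erase i, Complex.normSq (T i k) = 0 := by
      have := Finset.add_sum_erase Finset.univ (fun k => Complex.normSq (T i k))
        (Finset.mem_univ i)
      rw [h2] at this
      linarith [this]
    have h4 := (Finset.sum_eq_zero_iff_of_nonneg
      (fun k _ => Complex.normSq_nonneg (T i k))).mp h3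
    have hj : j ∈ Finset.univ.erase i := Finset.mem_erase.mpr ⟨fun h => hij h.symm, Finset.mem_univ j⟩
    exact Complex.normSq_eq_zero.mp (h4 j hj)
  suffices H : ∀ N : ℕ, ∀ i : Fin n, (i : ℕ) ≤ N → ∀ j, i ≠ j → T i j = 0 by
    intro i j; exact H i i le_rfl j
  intro N
  induction N with
  | zero =>
    intro i hi
    exact engine i (fun i' hi' => absurd (Nat.lt_of_lt_of_le hi' hi) (Nat.not_lt_zero _))
  | succ N IHN =>
    intro i hi
    exact engine i (fun i' hi' j h => IHN i' (by omega) j h)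

lemma trace_map_ofReal {n : ℕ} (M : Matrix (Fin n) (Fin n) ℝ) :
    Matrix.trace (M.map (algebraMap ℝ ℂ)) = ((Matrix.trace M : ℝ) : ℂ) := by
  rw [Matrix.trace, Matrix.trace, Complex.ofReal_sum]
  rfl

/-- For a real `m×m` matrix `E` with complex eigenvalues
`k₁,…,k_m` (roots of the characteristic polynomial, with multiplicity),
`‖S(E)‖² ≥ Σᵢ Re(kᵢ)²`, with equality iff `E` is normal. Here
`S(E) = (E + Eᵗ)/2` and `‖B‖² = tr(BBᵗ)`. -/
theorem symmPart_norm_ge_sum_re_sq_eigenvalues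
    (m : ℕ) (E : Matrix (Fin m) (Fin m) ℝ) :
    (((E.charpoly.map (algebraMap ℝ ℂ)).roots.map fun k => k.re ^ 2).sum ≤
        Matrix.trace (((1/2 : ℝ) • (E + Eᵀ)) * ((1/2 : ℝ) • (E + Eᵀ))ᵀ)) ∧
    ((((E.charpoly.map (algebraMap ℝ ℂ)).roots.map fun k => k.re ^ 2).sum =
        Matrix.trace (((1/2 : ℝ) • (E + Eᵀ)) * ((1/2 : ℝ) • (E + Eᵀ))ᵀ)) ↔
      E * Eᵀ = Eᵀ * E) := by
  set f : ℝ →+* ℂ := (algebraMap ℝ ℂ) with hf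
  set A : Matrix (Fin m) (Fin m) ℂ := E.map f with hA
  obtain ⟨U, hU, ht⟩ := schur_aux m A
  have hU' : U * star U = 1 := mul_eq_one_comm.mp hU
  set T : Matrix (Fin m) (Fin m) ℂ := star U * A * U with hT
  set d : Fin m → ℂ := fun i => T i i with hd
  -- star A is the map of the transpose
  have hstarA : star A = Eᵀ.map f := by
    ext i j
    simp [hA, Matrix.star_apply, Matrix.map_apply, hf, Complex.conj_ofReal]
  -- roots of the mapped charpoly are the diagonal entries of T
  have hcharT : T.charpoly = ∏ i, (X - C (d i)) := by
    have htri : (charmatrix T).BlockTriangular id := by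
      intro i j hij
      rw [Matrix.charmatrix_apply_ne T i j (ne_of_gt hij), ht i j hij, map_zero, neg_zero]
    rw [Matrix.charpoly, Matrix.det_of_upperTriangular htri]
    exact Finset.prod_congr rfl fun i _ => Matrix.charmatrix_apply_eq T i
  have hroots : (E.charpoly.map f).roots = Multiset.map d Finset.univ.val := by
    rw [← Matrix.charpoly_map E f, ← hA, ← charpoly_unitary_conj A U hU, ← hT, hcharT]
    have : ∏ i, (X - C (d i)) =
        (Multiset.map (fun a => X - C a) (Multiset.map d Finset.univ.val)).prod := by
      rw [Multiset.map_map]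
      rfl
    rw [this, Polynomial.roots_multiset_prod_X_sub_C]
  have hLHS : ((E.charpoly.map f).roots.map fun k => k.re ^ 2).sum
      = ∑ i, (d i).re ^ 2 := by
    rw [hroots, Multiset.map_map]
    rfl
  -- trace identities
  set t2 : ℝ := Matrix.trace (E * E) with ht2
  set tE : ℝ := Matrix.trace (E * Eᵀ) with htE
  have sand : ∀ M N : Matrix (Fin m) (Fin m) ℂ,
      star U * M * U * (star U * N * U) = star U * (M * N) * U := by
    intro M N
    simp only [← Matrix.mul_assoc]
    rw [Matrix.mul_assoc (star U * M) U (star U), hU', Matrix.mul_one]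
  have hstarT : star T = star U * star A * U := by
    rw [hT, Matrix.star_mul, Matrix.star_mul, star_star, ← Matrix.mul_assoc]
  have hTT : T * star T = star U * (A * star A) * U := by
    rw [hstarT, hT]; exact sand A (star A)
  have hTT' : star T * T = star U * (star A * A) * U := by
    rw [hstarT, hT]; exact sand (star A) A
  have hT2 : T * T = star U * (A * A) * U := by
    rw [hT]; exact sand A A
  have htraceconj : ∀ M : Matrix (Fin m) (Fin m) ℂ,
      Matrix.trace (star U * M * U) = Matrix.trace M := by
    intro M
    rw [Matrix.trace_mul_comm, ← Matrix.mul_assoc, hU', Matrix.one_mul]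
  have hc1 : Matrix.trace (T * star T) = (tE : ℂ) := by
    rw [hTT, htraceconj, hstarA, hA, ← Matrix.map_mul, trace_map_ofReal]
  have hc2 : Matrix.trace (T * T) = (t2 : ℂ) := by
    rw [hT2, htraceconj, hA, ← Matrix.map_mul, trace_map_ofReal]
  -- trace (T*T) over the diagonal
  have hc3 : Matrix.trace (T * T) = ∑ i, d i ^ 2 := by
    rw [Matrix.trace]
    apply Finset.sum_congr rfl
    intro i _
    rw [Matrix.diag_apply, Matrix.mul_apply, Finset.sum_eq_single i]
    · rw [pow_two]
    · intro k _ hk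
      rcases lt_or_gt_of_ne hk with h | h
      · rw [ht i k h, zero_mul]
      · rw [ht k i h, mul_zero]
    · intro h; exact absurd (Finset.mem_univ i) h
  have hc4 : Matrix.trace (T * star T) = ((∑ i, ∑ j, Complex.normSq (T i j) : ℝ) : ℂ) := by
    rw [Matrix.trace, Complex.ofReal_sum]
    apply Finset.sum_congr rfl
    intro i _
    rw [Matrix.diag_apply, Matrix.mul_apply, Complex.ofReal_sum]
    apply Finset.sum_congr rfl
    intro j _
    rw [Matrix.star_apply, Complex.star_def, Complex.mul_conj]
  have hsum : ∑ i, ∑ j, Complex.normSq (T i j) = tE :=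
    Complex.ofReal_inj.mp (by rw [← hc4, hc1])
  have hsum2 : ∑ i, ((d i) ^ 2).re = t2 := by
    have := hc2.symm.trans hc3
    have h := congrArg Complex.re this
    rw [Complex.ofReal_re, Complex.re_sum] at h
    exact h.symm
  -- the remainder term
  set R := ∑ i, ∑ j ∈ Finset.univ.erase i, Complex.normSq (T i j) with hR
  have hsplit : tE = (∑ i, Complex.normSq (d i)) + R := by
    rw [← hsum, hR, ← Finset.sum_add_distrib]
    apply Finset.sum_congr rfl
    intro i _
    exact (Finset.add_sum_erase Finset.univ (fun j => Complex.normSq (T i j))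
      (Finset.mem_univ i)).symm
  have hRnonneg : 0 ≤ R := by
    apply Finset.sum_nonneg
    intro i _
    exact Finset.sum_nonneg fun j _ => Complex.normSq_nonneg _
  -- LHS in terms of normSq and t2
  have hLHS2 : (∑ i, (d i).re ^ 2) = ((∑ i, Complex.normSq (d i)) + t2) / 2 := by
    rw [← hsum2, ← Finset.sum_add_distrib, Finset.sum_div]
    apply Finset.sum_congr rfl
    intro i _
    rw [Complex.normSq_apply, pow_two, pow_two, Complex.mul_re]
    ring
  -- RHS
  have hRHS : Matrix.trace (((1/2 : ℝ) • (E + Eᵀ)) * ((1/2 : ℝ) • (E + Eᵀ))ᵀ)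
      = (t2 + tE) / 2 := by
    rw [Matrix.transpose_smul, Matrix.transpose_add, Matrix.transpose_transpose,
      Matrix.smul_mul, Matrix.mul_smul, smul_smul,
      Matrix.add_mul, Matrix.mul_add, Matrix.mul_add,
      Matrix.trace_smul, Matrix.trace_add, Matrix.trace_add, Matrix.trace_add]
    have h1 : Matrix.trace (Eᵀ * Eᵀ) = t2 := by
      rw [← Matrix.transpose_mul, Matrix.trace_transpose, ht2]
    have h2 : Matrix.trace (Eᵀ * E) = tE := by
      rw [Matrix.trace_mul_comm, htE]
    rw [h1, h2, smul_eq_mul, ← ht2, ← htE]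
    ring
  rw [hLHS, hLHS2, hRHS]
  constructor
  · -- inequality
    linarith [hsplit, hRnonneg]
  · constructor
    · -- equality → normal
      intro heq
      have hReq : R = 0 := by linarith [hsplit]
      have hoff : ∀ i j : Fin m, i ≠ j → T i j = 0 := by
        intro i j hij
        have h1 := (Finset.sum_eq_zero_iff_of_nonneg
          (fun i (_ : i ∈ Finset.univ) =>
            Finset.sum_nonneg fun j _ => Complex.normSq_nonneg (T i j))).mp hReq i
          (Finset.mem_univ i)
        have h2 := (Finset.sum_eq_zero_iff_of_nonneg
          (fun j _ => Complex.normSq_nonneg (T i j))).mp h1 j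
          (Finset.mem_erase.mpr ⟨fun h => hij h.symm, Finset.mem_univ j⟩)
        exact Complex.normSq_eq_zero.mp h2
      have hTd : T = Matrix.diagonal d := by
        ext i j
        by_cases h : i = j
        · subst h; rw [Matrix.diagonal_apply_eq]
        · rw [Matrix.diagonal_apply_ne _ h]; exact hoff i j h
      have hTnorm : T * star T = star T * T := by
        rw [hTd]
        have : star (Matrix.diagonal d) = Matrix.diagonal (fun i => star (d i)) := by
          rw [Matrix.star_eq_conjTranspose, Matrix.diagonal_conjTranspose]
          rfl
        rw [this, Matrix.diagonal_mul_diagonal, Matrix.diagonal_mul_diagonal]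
        have h2 : (fun i => d i * star (d i)) = fun i => star (d i) * d i :=
          funext fun i => mul_comm _ _
        rw [h2]
      -- transfer normality from T to A to E
      have sand2 : ∀ M : Matrix (Fin m) (Fin m) ℂ, U * (star U * M * U) * star U = M := by
        intro M
        simp only [← Matrix.mul_assoc]
        rw [hU', Matrix.one_mul, Matrix.mul_assoc M U (star U), hU', Matrix.mul_one]
      have hAnorm : A * star A = star A * A := by
        calc A * star A = U * (star U * (A * star A) * U) * star U := (sand2 _).symm
          _ = U * (star U * (star A * A) * U) * star U := by rw [← hTT, ← hTT', hTnorm]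
          _ = star A * A := sand2 _
      have : (E * Eᵀ).map f = (Eᵀ * E).map f := by
        rw [Matrix.map_mul, Matrix.map_mul, ← hA, ← hstarA, hAnorm]
      ext i j
      have := congrFun (congrFun this i) j
      simpa [Matrix.map_apply, hf] using this
    · -- normal → equality
      intro hE
      have hAnorm : A * star A = star A * A := by
        rw [hstarA, hA, ← Matrix.map_mul, ← Matrix.map_mul, hE]
      have hTnorm : T * Tᴴ = Tᴴ * T := by
        rw [← Matrix.star_eq_conjTranspose, hTT, hTT', hAnorm]
      have hoff := tri_normal_offdiag_eq_zero T ht hTnorm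
      have hReq : R = 0 := by
        rw [hR]
        apply Finset.sum_eq_zero
        intro i _
        apply Finset.sum_eq_zero
        intro j hj
        rw [hoff i j fun h => (Finset.mem_erase.mp hj).1 h.symm, Complex.normSq_zero]
      linarith [hsplit]
end

section
/- Let A be a real m×m matrix and c ∈ ℝ. Then the matrix cA + A² + AᵗA is skew-symmetric if and only if A is normal (A Aᵗ = Aᵗ A) and every eigenvalue of A (i.e. every complex root of the characteristic polynomial of A) has real part equal to 0 or to −c/2. -/
open Matrix Polynomial

variable {m : ℕ}

lemma eval_charpoly' (M : Matrix (Fin m) (Fin m) ℂ) (t : ℂ) :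
    M.charpoly.eval t = (t • (1 : Matrix (Fin m) (Fin m) ℂ) - M).det := by
  rw [Matrix.charpoly, ← Polynomial.coe_evalRingHom,
    RingHom.map_det (evalRingHom t) M.charmatrix]
  congr 1
  ext i j
  by_cases h : i = j <;>
    simp [h, charmatrix_apply, Matrix.one_apply, Matrix.smul_apply]

lemma root_iff_eigvec (M : Matrix (Fin m) (Fin m) ℂ) (t : ℂ) :
    M.charpoly.IsRoot t ↔ ∃ v ≠ 0, M *ᵥ v = t • v := by
  rw [Polynomial.IsRoot, eval_charpoly', ← Matrix.exists_mulVec_eq_zero_iff]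
  constructor <;> rintro ⟨v, hv, h⟩ <;> refine ⟨v, hv, ?_⟩ <;>
    simp only [Matrix.sub_mulVec, Matrix.smul_mulVec, Matrix.one_mulVec,
      sub_eq_zero] at h ⊢ <;> exact h.symm

open scoped ComplexOrder in
lemma star_dp_zero {w : Fin m → ℂ} (h : star w ⬝ᵥ w = 0) : w = 0 :=
  dotProduct_star_self_eq_zero.mp h

lemma normal_adj_eigvec {M : Matrix (Fin m) (Fin m) ℂ} (hn : M * Mᴴ = Mᴴ * M)
    {t : ℂ} {v : Fin m → ℂ} (hv : M *ᵥ v = t • v) :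
    Mᴴ *ᵥ v = (starRingEnd ℂ t) • v := by
  set N : Matrix (Fin m) (Fin m) ℂ := Mᴴ - (starRingEnd ℂ t) • 1 with hN
  set P : Matrix (Fin m) (Fin m) ℂ := M - t • 1 with hPdef
  have hP : P *ᵥ v = 0 := by
    simp [hPdef, Matrix.sub_mulVec, Matrix.smul_mulVec, hv]
  have hNH : Nᴴ = P := by
    simp [hN, hPdef, conjTranspose_smul]
  have hcomm : P * N = N * P := by
    simp only [hN, hPdef, Matrix.mul_sub, Matrix.sub_mul, Matrix.mul_smul,
      Matrix.smul_mul, Matrix.mul_one, Matrix.one_mul, hn]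
    simp only [smul_sub, smul_smul, mul_comm]
    abel
  have key : star (N *ᵥ v) ⬝ᵥ (N *ᵥ v) = 0 := by
    rw [star_mulVec, dotProduct_mulVec, vecMul_vecMul, hNH, hcomm,
      ← dotProduct_mulVec, ← mulVec_mulVec, hP]
    simp
  have h0 : N *ᵥ v = 0 := star_dp_zero key
  have := h0
  rw [hN, Matrix.sub_mulVec, Matrix.smul_mulVec, Matrix.one_mulVec,
    sub_eq_zero] at this
  exact this

lemma skew_iff' (A : Matrix (Fin m) (Fin m) ℝ) (c : ℝ) :
    (c • A + A * A + Aᵀ * A)ᵀ = -(c • A + A * A + Aᵀ * A) ↔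
      c • (A + Aᵀ) + (A + Aᵀ) * (A + Aᵀ) + (Aᵀ * A - A * Aᵀ) = 0 := by
  rw [eq_neg_iff_add_eq_zero]
  constructor <;> intro h <;> [skip;skip] <;>
  · rw [← h]
    simp only [transpose_add, transpose_smul, transpose_mul, transpose_transpose]
    noncomm_ring
    simp only [smul_add]
    abel

lemma sym_trace_zero {C : Matrix (Fin m) (Fin m) ℝ} (hsym : Cᵀ = C)
    (h : trace (C * C) = 0) : C = 0 := by
  have hs : ∀ i j, C j i = C i j := fun i j => congrFun (congrFun hsym i) j
  have h2 : ∑ j, ∑ i, C j i ^ 2 = 0 := by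
    rw [← h]
    simp only [Matrix.trace, Matrix.diag, Matrix.mul_apply, sq]
    exact Finset.sum_congr rfl fun i _ => Finset.sum_congr rfl fun j _ => by
      rw [hs i j]
  ext i j
  have h1 : ∀ j' ∈ Finset.univ, (0:ℝ) ≤ ∑ i, C j' i ^ 2 := fun j' _ =>
    Finset.sum_nonneg fun i _ => sq_nonneg (C j' i)
  have h3 := (Finset.sum_eq_zero_iff_of_nonneg h1).mp h2 i (Finset.mem_univ i)
  have h4 := (Finset.sum_eq_zero_iff_of_nonneg
    (fun j' _ => sq_nonneg (C i j'))).mp h3 j (Finset.mem_univ j)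
  simpa using sq_eq_zero_iff.mp h4

lemma tr1 (A : Matrix (Fin m) (Fin m) ℝ) :
    trace ((Aᵀ * A - A * Aᵀ) * (A + Aᵀ)) = 0 := by
  have rot : ∀ X Y : Matrix (Fin m) (Fin m) ℝ, trace (X * Y) = trace (Y * X) :=
    fun X Y => trace_mul_comm X Y
  simp only [Matrix.sub_mul, Matrix.mul_add, trace_sub, trace_add, Matrix.mul_assoc]
  have p1 : trace (A * (Aᵀ * A)) = trace (Aᵀ * (A * A)) := by
    rw [rot A (Aᵀ * A)]; simp only [Matrix.mul_assoc]
  have p2 : trace (A * (Aᵀ * Aᵀ)) = trace (Aᵀ * (A * Aᵀ)) := by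
    rw [rot A (Aᵀ * Aᵀ)]; simp only [Matrix.mul_assoc]
    rw [rot Aᵀ (Aᵀ * A)]; simp only [Matrix.mul_assoc]
  rw [p1, p2]; ring

lemma tr2 (A : Matrix (Fin m) (Fin m) ℝ) :
    trace ((Aᵀ * A - A * Aᵀ) * ((A + Aᵀ) * (A + Aᵀ))) = 0 := by
  have rot : ∀ X Y : Matrix (Fin m) (Fin m) ℝ, trace (X * Y) = trace (Y * X) :=
    fun X Y => trace_mul_comm X Y
  simp only [Matrix.sub_mul, Matrix.mul_add, Matrix.add_mul, trace_sub, trace_add,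
    Matrix.mul_assoc]
  have p1 : trace (A * (Aᵀ * (A * A))) = trace (Aᵀ * (A * (A * A))) := by
    rw [rot A (Aᵀ * (A * A))]; simp only [Matrix.mul_assoc]
  have p2 : trace (A * (Aᵀ * (Aᵀ * A))) = trace (Aᵀ * (A * (A * Aᵀ))) := by
    rw [rot A (Aᵀ * (Aᵀ * A))]; simp only [Matrix.mul_assoc]
    rw [rot Aᵀ (Aᵀ * (A * A))]; simp only [Matrix.mul_assoc]
  have p3 : trace (A * (Aᵀ * (A * Aᵀ))) = trace (Aᵀ * (A * (Aᵀ * A))) := by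
    rw [rot A (Aᵀ * (A * Aᵀ))]; simp only [Matrix.mul_assoc]
  have p4 : trace (A * (Aᵀ * (Aᵀ * Aᵀ))) = trace (Aᵀ * (A * (Aᵀ * Aᵀ))) := by
    rw [rot A (Aᵀ * (Aᵀ * Aᵀ))]; simp only [Matrix.mul_assoc]
    rw [rot Aᵀ (Aᵀ * (Aᵀ * A))]; simp only [Matrix.mul_assoc]
    rw [rot Aᵀ (Aᵀ * (A * Aᵀ))]; simp only [Matrix.mul_assoc]
  rw [p1, p2, p3, p4]; ring

/-- For a real `m×m` matrix `A` and `c ∈ ℝ`, the matrix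
`cA + A² + AᵗA` is skew-symmetric iff `A` is normal and every complex
eigenvalue of `A` (root of its characteristic polynomial) has real part `0`
or `−c/2`. -/
theorem skew_cA_add_sq_add_tA_iff
    (m : ℕ) (A : Matrix (Fin m) (Fin m) ℝ) (c : ℝ) :
    (c • A + A * A + Aᵀ * A)ᵀ = -(c • A + A * A + Aᵀ * A) ↔
      (A * Aᵀ = Aᵀ * A ∧
        ∀ k ∈ (A.charpoly.map (algebraMap ℝ ℂ)).roots,
          k.re = 0 ∨ k.re = -c / 2) := by
  classical
  rw [skew_iff']
  set S : Matrix (Fin m) (Fin m) ℝ := A + Aᵀ with hSdef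
  set C : Matrix (Fin m) (Fin m) ℝ := Aᵀ * A - A * Aᵀ with hCdef
  set B : Matrix (Fin m) (Fin m) ℂ := A.map (algebraMap ℝ ℂ) with hBdef
  have hchar : A.charpoly.map (algebraMap ℝ ℂ) = B.charpoly :=
    (Matrix.charpoly_map A (algebraMap ℝ ℂ)).symm
  have hmapne : A.charpoly.map (algebraMap ℝ ℂ) ≠ 0 :=
    ((Matrix.charpoly_monic A).map (algebraMap ℝ ℂ)).ne_zero
  have hBH : Bᴴ = Aᵀ.map (algebraMap ℝ ℂ) := by
    ext i j
    simp [hBdef, Matrix.conjTranspose_apply, Matrix.map_apply, Complex.conj_ofReal]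
  have hScB : S.map (algebraMap ℝ ℂ) = B + Bᴴ := by
    rw [hBH, hSdef, Matrix.map_add _ (fun a b => by push_cast; ring)]
  have hSsym : Sᵀ = S := by
    rw [hSdef, transpose_add, transpose_transpose, add_comm]
  constructor
  · intro h
    have hCeq : C = -(c • S + S * S) := eq_neg_of_add_eq_zero_right h
    have hC2 : trace (C * C) = 0 := by
      have t1 : trace (C * S) = 0 := tr1 A
      have t2 : trace (C * (S * S)) = 0 := tr2 A
      nth_rewrite 2 [hCeq]
      rw [Matrix.mul_neg, trace_neg, Matrix.mul_add, trace_add, Matrix.mul_smul,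
        trace_smul, t1, t2]
      simp
    have hsym : Cᵀ = C := by
      rw [hCdef, transpose_sub, transpose_mul, transpose_mul, transpose_transpose]
    have hC0 : C = 0 := sym_trace_zero hsym hC2
    have hnormal : A * Aᵀ = Aᵀ * A := by
      have h' := hC0
      rw [hCdef, sub_eq_zero] at h'
      exact h'.symm
    refine ⟨hnormal, ?_⟩
    have hS : S * S + c • S = 0 := by
      have h' := h
      rw [hC0, add_zero, add_comm] at h'
      exact h'
    intro k hk
    have hkroot : B.charpoly.IsRoot k :=
      Polynomial.isRoot_of_mem_roots (by rwa [hchar] at hk)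
    obtain ⟨v, hv0, hvB⟩ := (root_iff_eigvec B k).mp hkroot
    have hBn : B * Bᴴ = Bᴴ * B := by
      rw [hBH, hBdef, ← Matrix.map_mul, ← Matrix.map_mul, hnormal]
    have hvBH : Bᴴ *ᵥ v = (starRingEnd ℂ k) • v := normal_adj_eigvec hBn hvB
    have hSc : (S.map (algebraMap ℝ ℂ)) *ᵥ v = (k + starRingEnd ℂ k) • v := by
      rw [hScB, Matrix.add_mulVec, hvB, hvBH, add_smul]
    have hSmap : (S.map (algebraMap ℝ ℂ)) * (S.map (algebraMap ℝ ℂ))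
        + (c : ℂ) • (S.map (algebraMap ℝ ℂ)) = 0 := by
      have h' := congrArg (fun M : Matrix (Fin m) (Fin m) ℝ => M.map (algebraMap ℝ ℂ)) hS
      rw [Matrix.map_add _ (fun a b => by push_cast; ring),
        Matrix.map_zero _ (map_zero (algebraMap ℝ ℂ)), Matrix.map_mul] at h'
      rw [← h']
      congr 1
      ext i j
      simp [Matrix.map_apply, Matrix.smul_apply]
    have hzero : ((k + starRingEnd ℂ k) ^ 2 + (c : ℂ) * (k + starRingEnd ℂ k)) • v = 0 := by
      have happ := congrArg (fun M : Matrix (Fin m) (Fin m) ℂ => M *ᵥ v) hSmap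
      simp only [Matrix.add_mulVec, Matrix.zero_mulVec, Matrix.smul_mulVec,
        ← Matrix.mulVec_mulVec] at happ
      rw [hSc, Matrix.mulVec_smul, hSc, smul_smul] at happ
      rw [smul_smul] at happ
      rw [add_smul, sq]
      exact happ
    have hscal : ((k + starRingEnd ℂ k) ^ 2 + (c : ℂ) * (k + starRingEnd ℂ k)) = 0 := by
      rcases smul_eq_zero.mp hzero with h' | h'
      · exact h'
      · exact absurd h' hv0
    have hre : (2 * k.re) ^ 2 + c * (2 * k.re) = 0 := by
      rw [Complex.add_conj] at hscal
      exact_mod_cast hscal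
    have hfac : (2 * k.re) * (2 * k.re + c) = 0 := by ring_nf; ring_nf at hre; linarith
    rcases mul_eq_zero.mp hfac with h' | h'
    · left; linarith
    · right; linarith
  · rintro ⟨hnormal, hroots⟩
    have hC0 : C = 0 := by rw [hCdef, hnormal, sub_self]
    have hBn : B * Bᴴ = Bᴴ * B := by
      rw [hBH, hBdef, ← Matrix.map_mul, ← Matrix.map_mul, hnormal]
    suffices hS : S * S + c • S = 0 by
      rw [hC0, add_zero, add_comm]
      exact hS
    set Sc : Matrix (Fin m) (Fin m) ℂ := S.map (algebraMap ℝ ℂ) with hScdef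
    have hherm : Sc.IsHermitian := by
      rw [Matrix.IsHermitian]
      ext i j
      simp [hScdef, Matrix.conjTranspose_apply, Matrix.map_apply, Complex.conj_ofReal,
        ← congrFun (congrFun hSsym i) j, Matrix.transpose_apply]
    have hcommBSc : B * Sc = Sc * B := by
      rw [hScB, Matrix.mul_add, Matrix.add_mul, hBn]
    have heig : ∀ i, hherm.eigenvalues i = 0 ∨ hherm.eigenvalues i = -c := by
      intro i
      have hw := hherm.mulVec_eigenvectorBasis i
      set w : Fin m → ℂ := ⇑(hherm.eigenvectorBasis i) with hwdef
      have hw0 : w ≠ 0 := by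
        have := hherm.eigenvectorBasis.orthonormal.ne_zero i
        intro hcon
        apply this
        ext j
        exact congrFun hcon j
      set μ : ℝ := hherm.eigenvalues i with hmu
      have hwS : Sc *ᵥ w = (μ : ℂ) • w := by
        refine hw.trans ?_
        ext j
        simp [Complex.real_smul]
      set V : Submodule ℂ (Fin m → ℂ) := Module.End.eigenspace (Matrix.mulVecLin Sc) (μ : ℂ)
        with hVdef
      have hwV : w ∈ V := by
        rw [hVdef, Module.End.mem_eigenspace_iff, Matrix.mulVecLin_apply]
        exact hwS
      have hVnt : Nontrivial V := by
        refine ⟨⟨⟨w, hwV⟩, 0, fun hcon => hw0 ?_⟩⟩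
        simpa using congrArg Subtype.val hcon
      have hmaps : ∀ x ∈ V, (Matrix.mulVecLin B) x ∈ V := by
        intro x hx
        rw [hVdef, Module.End.mem_eigenspace_iff, Matrix.mulVecLin_apply] at hx ⊢
        rw [Matrix.mulVecLin_apply, Matrix.mulVec_mulVec, ← hcommBSc,
          ← Matrix.mulVec_mulVec, hx, Matrix.mulVec_smul]
      let g : V →ₗ[ℂ] V := (Matrix.mulVecLin B).restrict hmaps
      obtain ⟨lam, hlam⟩ := Module.End.exists_eigenvalue g
      obtain ⟨x, hx⟩ := hlam.exists_hasEigenvector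
      set y : Fin m → ℂ := (x : Fin m → ℂ) with hydef
      have hy0 : y ≠ 0 := by
        simpa [hydef, Submodule.coe_eq_zero] using hx.2
      have hyB : B *ᵥ y = lam • y := by
        have := hx.apply_eq_smul
        have h2 := congrArg (Subtype.val) this
        simpa [g, LinearMap.restrict_apply, Matrix.mulVecLin_apply, hydef] using h2
      have hyS : Sc *ᵥ y = (μ : ℂ) • y := by
        have hxV : y ∈ Module.End.eigenspace Sc.mulVecLin (μ : ℂ) := x.2
        rw [Module.End.mem_eigenspace_iff, Matrix.mulVecLin_apply] at hxV
        exact hxV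
      have hroot : lam ∈ (A.charpoly.map (algebraMap ℝ ℂ)).roots := by
        rw [Polynomial.mem_roots hmapne, hchar]
        exact (root_iff_eigvec B lam).mpr ⟨y, hy0, hyB⟩
      have hre := hroots lam hroot
      have hyBH := normal_adj_eigvec hBn hyB
      have hBH2 : Bᴴ *ᵥ y = ((μ : ℂ) - lam) • y := by
        have h1 : (B + Bᴴ) *ᵥ y = (μ : ℂ) • y := by rw [← hScB]; exact hyS
        rw [Matrix.add_mulVec, hyB] at h1
        have h2 := sub_eq_of_eq_add' h1.symm
        rw [← h2, sub_smul]
      have hmueq : (μ : ℂ) = lam + starRingEnd ℂ lam := by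
        have heq : ((μ : ℂ) - lam) • y = (starRingEnd ℂ lam) • y := by
          rw [← hBH2, hyBH]
        have := sub_eq_zero.mpr heq
        rw [← sub_smul] at this
        rcases smul_eq_zero.mp this with h' | h'
        · have h3 := sub_eq_zero.mp h'
          rw [← h3]; ring
        · exact absurd h' hy0
      have hmure : μ = 2 * lam.re := by
        rw [Complex.add_conj] at hmueq
        exact_mod_cast hmueq
      rcases hre with h' | h'
      · left; rw [hmure, h']; ring
      · right; rw [hmure, h']; ring
    -- assemble via spectral theorem
    set U : Matrix (Fin m) (Fin m) ℂ := (hherm.eigenvectorUnitary : Matrix (Fin m) (Fin m) ℂ)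
      with hUdef
    set D : Matrix (Fin m) (Fin m) ℂ :=
      Matrix.diagonal (RCLike.ofReal ∘ hherm.eigenvalues) with hDdef
    have hsp : Sc = U * D * star U := hherm.spectral_theorem
    have hU1 : star U * U = 1 := Unitary.coe_star_mul_self hherm.eigenvectorUnitary
    have hDzero : D * D + (c : ℂ) • D = 0 := by
      rw [hDdef, Matrix.diagonal_mul_diagonal, ← Matrix.diagonal_smul,
        Matrix.diagonal_add]
      ext i j
      by_cases hij : i = j
      · subst hij
        rcases heig i with h' | h' <;>
          simp [Matrix.diagonal_apply_eq, Function.comp, h'] <;> push_cast <;> ring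
      · simp [Matrix.diagonal_apply_ne _ hij]
    have hSc0 : Sc * Sc + (c : ℂ) • Sc = 0 := by
      rw [hsp]
      have e1 : (U * D * star U) * (U * D * star U) = U * (D * D) * star U := by
        rw [show (U * D * star U) * (U * D * star U)
            = U * D * (star U * U) * (D * star U) from by
          simp only [Matrix.mul_assoc], hU1, Matrix.mul_one]
        simp only [Matrix.mul_assoc]
      have e2 : (c : ℂ) • (U * D * star U) = U * ((c : ℂ) • D) * star U := by
        rw [Matrix.mul_smul, Matrix.smul_mul]
      rw [e1, e2, ← Matrix.add_mul, ← Matrix.mul_add, hDzero, Matrix.mul_zero,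
        Matrix.zero_mul]
    have hmap0 : (S * S + c • S).map (algebraMap ℝ ℂ) = 0 := by
      rw [Matrix.map_add _ (fun a b => by push_cast; ring), Matrix.map_mul]
      have hsmulmap : (c • S).map (algebraMap ℝ ℂ) = (c : ℂ) • S.map (algebraMap ℝ ℂ) := by
        ext i j
        simp only [Matrix.map_apply, Matrix.smul_apply, smul_eq_mul,
          Complex.coe_algebraMap, Complex.ofReal_mul]
      rw [hsmulmap]
      exact hSc0
    ext i j
    have h2 := congrFun (congrFun hmap0 i) j
    simp only [Matrix.map_apply, Matrix.zero_apply, Complex.coe_algebraMap,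
      Complex.ofReal_eq_zero] at h2
    simpa using h2
end

section
/- Let 𝔤(a,v,A) be a Hermitian almost abelian Lie algebra with Bismut torsion 3-form H. Then for all X, Y, Z ∈ 𝔫₁: H(X,Y,Z) = 0, H(e₁,Y,Z) = −2·g(S(A)J₁Y, Z), H(e₂ₙ,Y,Z) = 0, and H(e₂ₙ,e₁,Z) = −g(v,Z). -/
open Module

/-- The Bismut torsion 3-form of a Hermitian almost abelian
Lie algebra `𝔤(a,v,A)` satisfies, for `X,Y,Z ∈ 𝔫₁`: `H(X,Y,Z) = 0`,
`H(e₁,Y,Z) = −2g(S(A)J₁Y, Z)`, `H(e₂ₙ,Y,Z) = 0`, `H(e₂ₙ,e₁,Z) = −g(v,Z)`. -/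
theorem almostAbelian_bismutH_values
    (L : Type*) [LieRing L] [LieAlgebra ℝ L] (D : AlmostAbelianHermitian L) :
    (∀ x ∈ D.n1, ∀ y ∈ D.n1, ∀ z ∈ D.n1, bismutH D.J D.g x y z = 0) ∧
    (∀ y ∈ D.n1, ∀ z ∈ D.n1,
      bismutH D.J D.g D.e1 y z = -2 * D.g (D.SA (D.J y)) z) ∧
    (∀ y ∈ D.n1, ∀ z ∈ D.n1, bismutH D.J D.g D.e2n y z = 0) ∧
    (∀ z ∈ D.n1, bismutH D.J D.g D.e2n D.e1 z = - D.g D.v z) := by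
  obtain ⟨⟨hJJ, _⟩, ⟨gsymm, _, gJ⟩⟩ := D.herm
  have hJe2n : D.J D.e2n = -D.e1 := by rw [← D.hJe1, hJJ]
  refine ⟨?_, ?_, ?_, ?_⟩
  · intro x hx y hy z hz
    unfold bismutH
    rw [D.habel2 _ (D.hJn1 x hx) _ (D.hJn1 y hy),
        D.habel2 _ (D.hJn1 y hy) _ (D.hJn1 z hz),
        D.habel2 _ (D.hJn1 z hz) _ (D.hJn1 x hx)]
    simp
  · intro y hy z hz
    have hJy := D.hJn1 y hy
    have hJz := D.hJn1 z hz
    have key : D.g (D.A (D.J z)) y = -(D.g (D.At (D.J y)) z) := by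
      rw [D.hAJ z hz, ← gJ (D.J (D.A z)) y, hJJ]
      simp only [map_neg, LinearMap.neg_apply]
      rw [D.hAdj z hz (D.J y) hJy, gsymm]
    unfold bismutH
    rw [D.hJe1, D.hbra2 _ hJy, D.habel2 _ hJy _ hJz, ← lie_skew, D.hbra2 _ hJz]
    simp only [map_neg, map_zero, LinearMap.neg_apply, LinearMap.zero_apply,
      AlmostAbelianHermitian.SA, map_add, map_smul, LinearMap.add_apply,
      LinearMap.smul_apply, smul_eq_mul]
    linarith [key]
  · intro y hy z hz
    unfold bismutH
    rw [hJe2n, neg_lie, D.habel1 _ (D.hJn1 y hy),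
        D.habel2 _ (D.hJn1 y hy) _ (D.hJn1 z hz), lie_neg, ← lie_skew,
        D.habel1 _ (D.hJn1 z hz)]
    simp
  · intro z hz
    have hJz := D.hJn1 z hz
    unfold bismutH
    rw [hJe2n, D.hJe1, neg_lie, ← lie_skew, neg_neg, D.hbra1, D.hbra2 _ hJz,
        lie_neg, lie_skew, D.habel1 _ hJz]
    have h1 : D.g D.e1 z = 0 := D.hge1n1 z hz
    have h2 : D.g (D.A (D.J z)) D.e2n = 0 := by
      rw [gsymm]; exact D.hge2nn1 _ (D.hAn1 _ hJz)
    simp only [map_add, map_smul, map_zero, LinearMap.add_apply,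
      LinearMap.smul_apply, LinearMap.zero_apply, smul_eq_mul, h1, h2]
    ring
end

section
/- Let 𝔤(a,v,A) be a Hermitian almost abelian Lie algebra with Bismut torsion 3-form H. Then dH(W,X,Y,Z) = 0 whenever at least three of the vectors W, X, Y, Z lie in 𝔫₁, and for all Y, Z ∈ 𝔫₁ one has dH(e₂ₙ, e₁, Y, Z) = 2·g(S(aA + A² + AᵗA)J₁Y, Z). -/
open Module

namespace AlmostAbelianHermitian

variable {L : Type*} [LieRing L] [LieAlgebra ℝ L] (D : AlmostAbelianHermitian L)

variable {L' : Type*} [LieRing L'] [LieAlgebra ℝ L'] (D : AlmostAbelianHermitian L')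

lemma hJ2 (x : L') : D.J (D.J x) = -x := D.herm.1.1 x

lemma gsym (x y : L') : D.g x y = D.g y x := D.herm.2.1 x y

lemma gJ (x y : L') : D.g (D.J x) (D.J y) = D.g x y := D.herm.2.2.2 x y

lemma gJswap (x w : L') : D.g (D.J x) w = -(D.g x (D.J w)) := by
  have h := D.gJ x (D.J w)
  rw [D.hJ2 w, map_neg] at h
  linarith

lemma gadj (u z : L') (hu : u ∈ D.n1) (hz : z ∈ D.n1) :
    D.g (D.At u) z = D.g (D.A z) u :=
  (D.gsym _ _).trans (D.hAdj z hz u hu).symm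

lemma hJe2n : D.J D.e2n = -D.e1 := by rw [← D.hJe1, D.hJ2]

lemma brn1 (W x : L') (hx : x ∈ D.n1) : ⁅W, x⁆ ∈ D.n1 := by
  obtain ⟨c1, c2, w, hw, rfl⟩ := D.hspan W
  rw [add_lie, add_lie, smul_lie, smul_lie, D.habel1 x hx, D.habel2 w hw x hx,
    D.hbra2 x hx]
  simpa using D.n1.smul_mem c2 (D.hAn1 x hx)

lemma brn1' (x W : L') (hx : x ∈ D.n1) : ⁅x, W⁆ ∈ D.n1 := by
  rw [← lie_skew]
  exact D.n1.neg_mem (D.brn1 W x hx)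

lemma Hzero (y z : L') : bismutH D.J D.g 0 y z = 0 := by
  simp [bismutH]

lemma Hn1 (x y z : L') (hx : x ∈ D.n1) (hy : y ∈ D.n1) (hz : z ∈ D.n1) :
    bismutH D.J D.g x y z = 0 := by
  simp only [bismutH, D.habel2 _ (D.hJn1 x hx) _ (D.hJn1 y hy),
    D.habel2 _ (D.hJn1 y hy) _ (D.hJn1 z hz),
    D.habel2 _ (D.hJn1 z hz) _ (D.hJn1 x hx), map_zero, LinearMap.zero_apply]
  ring

end AlmostAbelianHermitian

/-- For a Hermitian almost abelian Lie algebra `𝔤(a,v,A)`,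
`dH(W,X,Y,Z) = 0` whenever at least three of the entries lie in `𝔫₁`, and
`dH(e₂ₙ,e₁,Y,Z) = 2g(S(aA + A² + AᵗA)J₁Y, Z)` for `Y,Z ∈ 𝔫₁`. -/
theorem almostAbelian_dH_values
    (L : Type*) [LieRing L] [LieAlgebra ℝ L] (D : AlmostAbelianHermitian L) :
    (∀ W X Y Z : L,
      ((X ∈ D.n1 ∧ Y ∈ D.n1 ∧ Z ∈ D.n1) ∨ (W ∈ D.n1 ∧ Y ∈ D.n1 ∧ Z ∈ D.n1) ∨
       (W ∈ D.n1 ∧ X ∈ D.n1 ∧ Z ∈ D.n1) ∨ (W ∈ D.n1 ∧ X ∈ D.n1 ∧ Y ∈ D.n1)) →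
      dThree (bismutH D.J D.g) W X Y Z = 0) ∧
    (∀ y ∈ D.n1, ∀ z ∈ D.n1,
      dThree (bismutH D.J D.g) D.e2n D.e1 y z = 2 * D.g (D.SM D.a (D.J y)) z) := by
  constructor
  · intro W X Y Z h
    rcases h with ⟨hX, hY, hZ⟩ | ⟨hW, hY, hZ⟩ | ⟨hW, hX, hZ⟩ | ⟨hW, hX, hY⟩
    · rw [dThree, D.habel2 X hX Y hY, D.habel2 X hX Z hZ, D.habel2 Y hY Z hZ,
        D.Hn1 _ _ _ (D.brn1 W X hX) hY hZ, D.Hn1 _ _ _ (D.brn1 W Y hY) hX hZ,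
        D.Hn1 _ _ _ (D.brn1 W Z hZ) hX hY, D.Hzero, D.Hzero, D.Hzero]
      ring
    · rw [dThree, D.habel2 W hW Y hY, D.habel2 W hW Z hZ, D.habel2 Y hY Z hZ,
        D.Hn1 _ _ _ (D.brn1' W X hW) hY hZ, D.Hn1 _ _ _ (D.brn1 X Y hY) hW hZ,
        D.Hn1 _ _ _ (D.brn1 X Z hZ) hW hY, D.Hzero, D.Hzero, D.Hzero]
      ring
    · rw [dThree, D.habel2 W hW X hX, D.habel2 W hW Z hZ, D.habel2 X hX Z hZ,
        D.Hn1 _ _ _ (D.brn1' W Y hW) hX hZ, D.Hn1 _ _ _ (D.brn1' X Y hX) hW hZ,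
        D.Hn1 _ _ _ (D.brn1 Y Z hZ) hW hX, D.Hzero, D.Hzero, D.Hzero]
      ring
    · rw [dThree, D.habel2 W hW X hX, D.habel2 W hW Y hY, D.habel2 X hX Y hY,
        D.Hn1 _ _ _ (D.brn1' W Z hW) hX hY, D.Hn1 _ _ _ (D.brn1' X Z hX) hW hY,
        D.Hn1 _ _ _ (D.brn1' Y Z hY) hW hX, D.Hzero, D.Hzero, D.Hzero]
      ring
  · intro y hy z hz
    have hJy : D.J y ∈ D.n1 := D.hJn1 y hy
    have hJz : D.J z ∈ D.n1 := D.hJn1 z hz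
    have hJv : D.J (D.a • D.e1 + D.v) = D.a • D.e2n + D.J D.v := by
      rw [map_add, map_smul, D.hJe1]
    -- Brackets needed inside the three nonzero H terms
    have b1 : ⁅D.J (D.a • D.e1 + D.v), D.J y⁆ = D.a • D.A (D.J y) := by
      rw [hJv, add_lie, smul_lie, D.hbra2 _ hJy,
        D.habel2 _ (D.hJn1 D.v D.hv) _ hJy, add_zero]
    have b1' : ⁅D.J z, D.J (D.a • D.e1 + D.v)⁆ = -(D.a • D.A (D.J z)) := by
      rw [hJv, lie_add, lie_smul, D.habel2 _ hJz _ (D.hJn1 D.v D.hv), add_zero,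
        ← lie_skew, D.hbra2 _ hJz, smul_neg]
    have b2 : ⁅D.J y, D.J z⁆ = 0 := D.habel2 _ hJy _ hJz
    -- The three nonzero H values
    have hT1 : bismutH D.J D.g (D.a • D.e1 + D.v) y z
        = -(D.a * D.g (D.A (D.J y)) z) + D.a * D.g (D.A (D.J z)) y := by
      rw [bismutH, b1, b1', b2]
      simp [map_smul]
    have hT2 : bismutH D.J D.g (D.A y) D.e1 z
        = D.g (D.A (D.J (D.A y))) z - D.g (D.A (D.J z)) (D.A y) := by
      have c1 : ⁅D.J (D.A y), D.J D.e1⁆ = -(D.A (D.J (D.A y))) := by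
        rw [D.hJe1, ← lie_skew, D.hbra2 _ (D.hJn1 _ (D.hAn1 y hy))]
      have c2 : ⁅D.J D.e1, D.J z⁆ = D.A (D.J z) := by
        rw [D.hJe1, D.hbra2 _ hJz]
      have c3 : ⁅D.J z, D.J (D.A y)⁆ = 0 :=
        D.habel2 _ hJz _ (D.hJn1 _ (D.hAn1 y hy))
      rw [bismutH, c1, c2, c3]
      simp
    have hT3 : bismutH D.J D.g (D.A z) D.e1 y
        = D.g (D.A (D.J (D.A z))) y - D.g (D.A (D.J y)) (D.A z) := by
      have c1 : ⁅D.J (D.A z), D.J D.e1⁆ = -(D.A (D.J (D.A z))) := by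
        rw [D.hJe1, ← lie_skew, D.hbra2 _ (D.hJn1 _ (D.hAn1 z hz))]
      have c2 : ⁅D.J D.e1, D.J y⁆ = D.A (D.J y) := by
        rw [D.hJe1, D.hbra2 _ hJy]
      have c3 : ⁅D.J y, D.J (D.A z)⁆ = 0 :=
        D.habel2 _ hJy _ (D.hJn1 _ (D.hAn1 z hz))
      rw [bismutH, c1, c2, c3]
      simp
    have hdT : dThree (bismutH D.J D.g) D.e2n D.e1 y z
        = D.a * D.g (D.A (D.J y)) z - D.a * D.g (D.A (D.J z)) y
          + D.g (D.A (D.J (D.A y))) z - D.g (D.A (D.J z)) (D.A y)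
          - D.g (D.A (D.J (D.A z))) y + D.g (D.A (D.J y)) (D.A z) := by
      rw [dThree, D.hbra1, D.hbra2 y hy, D.hbra2 z hz, D.habel1 y hy,
        D.habel1 z hz, D.habel2 y hy z hz, D.Hzero, D.Hzero, D.Hzero,
        hT1, hT2, hT3]
      ring
    have hSM : 2 * D.g (D.SM D.a (D.J y)) z
        = D.a * D.g (D.A (D.J y)) z + D.a * D.g (D.At (D.J y)) z
          + D.g (D.A (D.A (D.J y))) z + D.g (D.At (D.At (D.J y))) z
          + 2 * D.g (D.At (D.A (D.J y))) z := by
      rw [AlmostAbelianHermitian.SM]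
      simp only [map_add, map_smul, LinearMap.add_apply, LinearMap.smul_apply,
        smul_eq_mul]
      ring
    -- scalar identities from the adjoint, J-invariance and A∘J = J∘A
    have i1' : D.g (D.At (D.J y)) z = -(D.g (D.A (D.J z)) y) := by
      rw [D.gadj _ _ hJy hz, D.hAJ z hz, D.gJswap]
      ring
    have i2 : D.g (D.At (D.At (D.J y))) z = -(D.g (D.A (D.J (D.A z))) y) := by
      rw [D.gadj _ _ (D.hAtn1 _ hJy) hz, D.hAJ _ (D.hAn1 z hz), D.gJswap,
        neg_neg, ← D.hAdj (D.A z) (D.hAn1 z hz) (D.J y) hJy]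
    have i3 : D.g (D.At (D.A (D.J y))) z = D.g (D.A (D.J y)) (D.A z) := by
      rw [D.gadj _ _ (D.hAn1 _ hJy) hz, D.gsym]
    have i4 : D.g (D.A (D.J z)) (D.A y) = -(D.g (D.A (D.J y)) (D.A z)) := by
      rw [D.hAJ z hz, D.gJswap, ← D.hAJ y hy, D.gsym, D.hAJ y hy, D.gJswap,
        D.gsym]
    have i5 : D.g (D.A (D.J (D.A y))) z = D.g (D.A (D.A (D.J y))) z := by
      rw [← D.hAJ y hy]
    rw [hdT, hSM, i1', i2, i3, i4, i5]
    ring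
end

section
/- Let p, q, s be real numbers with p ≠ 0, 0 < |q| ≤ |p|, and 2q + p ≠ 0, and let 𝔩₈^{p,q,s} be the 6-dimensional real Lie algebra with basis f₁,…,f₆ and nonzero brackets [f₆,f₁] = p·f₁, [f₆,f₂] = q·f₂, [f₆,f₃] = q·f₃, [f₆,f₄] = s·f₄ − f₅, [f₆,f₅] = f₄ + s·f₅. Equip it with the complex structure J defined by Jf₁ = f₆, Jf₆ = −f₁, Jf₂ = f₃, Jf₃ = −f₂, Jf₄ = f₅, Jf₅ = −f₄, and the inner product g making f₁,…,f₆ orthonormal. If s = q or s = 0, then (J,g) is LCSKT with closed 1-form α = −(2q+p)·f⁶ (where f⁶ is the dual 1-form of f₆). In particular, for s = q = −p/4 the Lie algebra 𝔩₈^{p,q,s} is unimodular and (J,g) is a non-trivial LCSKT structure, i.e. dH ≠ 0. -/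
open Module

set_option maxHeartbeats 4000000
/-- The Lie algebra `𝔩₈^{p,q,s}` (with `p ≠ 0`,
`0 < |q| ≤ |p|`, `2q + p ≠ 0`) with its standard Hermitian structure: if
`s = q` or `s = 0`, then `(J,g)` is LCSKT with closed 1-form
`α = −(2q+p)·f⁶`; in particular for `s = q = −p/4` the algebra is unimodular
and the LCSKT structure is non-trivial, i.e. `dH ≠ 0`. -/
theorem l8_lcskt
    (L : Type*) [LieRing L] [LieAlgebra ℝ L]
    (p q s : ℝ) (hp : p ≠ 0) (hq : 0 < |q|) (hqp : |q| ≤ |p|)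
    (h2qp : 2 * q + p ≠ 0)
    (f : Basis (Fin 6) ℝ L)
    (hb1 : ⁅f 5, f 0⁆ = p • f 0) (hb2 : ⁅f 5, f 1⁆ = q • f 1)
    (hb3 : ⁅f 5, f 2⁆ = q • f 2) (hb4 : ⁅f 5, f 3⁆ = s • f 3 - f 4)
    (hb5 : ⁅f 5, f 4⁆ = f 3 + s • f 4)
    (hb0 : ∀ i j : Fin 6, i ≠ 5 → j ≠ 5 → ⁅f i, f j⁆ = 0)
    (J : L →ₗ[ℝ] L)
    (hJ0 : J (f 0) = f 5) (hJ5 : J (f 5) = -f 0)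
    (hJ1 : J (f 1) = f 2) (hJ2 : J (f 2) = -f 1)
    (hJ3 : J (f 3) = f 4) (hJ4 : J (f 4) = -f 3)
    (g : L →ₗ[ℝ] L →ₗ[ℝ] ℝ)
    (hg : ∀ i j : Fin 6, g (f i) (f j) = if i = j then 1 else 0) :
    ((s = q ∨ s = 0) →
      ((-(2 * q + p)) • (f.coord 5) ≠ 0 ∧
       IsClosedOneForm ((-(2 * q + p)) • (f.coord 5)) ∧
       ∀ W X Y Z : L,
         dThree (bismutH J g) W X Y Z
           = wedgeOneThree ((-(2 * q + p)) • (f.coord 5)) (bismutH J g) W X Y Z)) ∧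
    ((s = q ∧ q = -p / 4) →
      ((∀ X : L, LinearMap.trace ℝ L (LieAlgebra.ad ℝ L X) = 0) ∧
       ∃ W X Y Z : L, dThree (bismutH J g) W X Y Z ≠ 0)) := by

  classical
  have hq0 : q ≠ 0 := by
    intro h; rw [h] at hq; simp at hq
  -- expansion of a vector in the basis
  have hA : ∀ X : L, X = f.repr X 0 • f 0 + f.repr X 1 • f 1 + f.repr X 2 • f 2 +
      f.repr X 3 • f 3 + f.repr X 4 • f 4 + f.repr X 5 • f 5 := by
    intro X
    have h := Basis.sum_repr f X
    rw [Fin.sum_univ_six] at h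
    exact h.symm
  have hb1' : ⁅f 0, f 5⁆ = -(p • f 0) := by rw [← lie_skew, hb1]
  have hb2' : ⁅f 1, f 5⁆ = -(q • f 1) := by rw [← lie_skew, hb2]
  have hb3' : ⁅f 2, f 5⁆ = -(q • f 2) := by rw [← lie_skew, hb3]
  have hb4' : ⁅f 3, f 5⁆ = -(s • f 3 - f 4) := by rw [← lie_skew, hb4]
  have hb5' : ⁅f 4, f 5⁆ = -(f 3 + s • f 4) := by rw [← lie_skew, hb5]
  -- the bracket of two arbitrary vectors
  have hBr : ∀ U V : L, ⁅U, V⁆ =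
      (p * (f.repr U 5 * f.repr V 0 - f.repr V 5 * f.repr U 0)) • f 0 +
      (q * (f.repr U 5 * f.repr V 1 - f.repr V 5 * f.repr U 1)) • f 1 +
      (q * (f.repr U 5 * f.repr V 2 - f.repr V 5 * f.repr U 2)) • f 2 +
      (s * (f.repr U 5 * f.repr V 3 - f.repr V 5 * f.repr U 3) +
        (f.repr U 5 * f.repr V 4 - f.repr V 5 * f.repr U 4)) • f 3 +
      (-(f.repr U 5 * f.repr V 3 - f.repr V 5 * f.repr U 3) +
        s * (f.repr U 5 * f.repr V 4 - f.repr V 5 * f.repr U 4)) • f 4 := by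
    intro U V
    conv_lhs => rw [hA U, hA V]
    simp only [add_lie, lie_add, smul_lie, lie_smul, lie_self, smul_zero, zero_add, add_zero,
      hb1, hb2, hb3, hb4, hb5, hb1', hb2', hb3', hb4', hb5', hb0 0 0 (by decide) (by decide), hb0 0 1 (by decide) (by decide), hb0 0 2 (by decide) (by decide), hb0 0 3 (by decide) (by decide), hb0 0 4 (by decide) (by decide), hb0 1 0 (by decide) (by decide), hb0 1 1 (by decide) (by decide), hb0 1 2 (by decide) (by decide), hb0 1 3 (by decide) (by decide), hb0 1 4 (by decide) (by decide), hb0 2 0 (by decide) (by decide), hb0 2 1 (by decide) (by decide), hb0 2 2 (by decide) (by decide), hb0 2 3 (by decide) (by decide), hb0 2 4 (by decide) (by decide), hb0 3 0 (by decide) (by decide), hb0 3 1 (by decide) (by decide), hb0 3 2 (by decide) (by decide), hb0 3 3 (by decide) (by decide), hb0 3 4 (by decide) (by decide), hb0 4 0 (by decide) (by decide), hb0 4 1 (by decide) (by decide), hb0 4 2 (by decide) (by decide), hb0 4 3 (by decide) (by decide), hb0 4 4 (by decide) (by decide)]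
    module
  -- coordinates of a bracket
  have hc0 : ∀ U V : L, f.repr ⁅U, V⁆ 0 =
      p * (f.repr U 5 * f.repr V 0 - f.repr V 5 * f.repr U 0) := by
    intro U V
    rw [hBr U V]
    simp [Basis.repr_self, Finsupp.single_apply]
  have hc1 : ∀ U V : L, f.repr ⁅U, V⁆ 1 =
      q * (f.repr U 5 * f.repr V 1 - f.repr V 5 * f.repr U 1) := by
    intro U V
    rw [hBr U V]
    simp [Basis.repr_self, Finsupp.single_apply]
  have hc2 : ∀ U V : L, f.repr ⁅U, V⁆ 2 =
      q * (f.repr U 5 * f.repr V 2 - f.repr V 5 * f.repr U 2) := by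
    intro U V
    rw [hBr U V]
    simp [Basis.repr_self, Finsupp.single_apply]
  have hc3 : ∀ U V : L, f.repr ⁅U, V⁆ 3 =
      s * (f.repr U 5 * f.repr V 3 - f.repr V 5 * f.repr U 3) +
        (f.repr U 5 * f.repr V 4 - f.repr V 5 * f.repr U 4) := by
    intro U V
    rw [hBr U V]
    simp [Basis.repr_self, Finsupp.single_apply]
  have hc4 : ∀ U V : L, f.repr ⁅U, V⁆ 4 =
      -(f.repr U 5 * f.repr V 3 - f.repr V 5 * f.repr U 3) +
        s * (f.repr U 5 * f.repr V 4 - f.repr V 5 * f.repr U 4) := by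
    intro U V
    rw [hBr U V]
    simp [Basis.repr_self, Finsupp.single_apply]
  have hc5 : ∀ U V : L, f.repr ⁅U, V⁆ 5 = 0 := by
    intro U V
    rw [hBr U V]
    simp [Basis.repr_self, Finsupp.single_apply]
  -- J in coordinates
  have hJv : ∀ v : L, J v = (-(f.repr v 5)) • f 0 + (-(f.repr v 2)) • f 1 +
      (f.repr v 1) • f 2 + (-(f.repr v 4)) • f 3 + (f.repr v 3) • f 4 +
      (f.repr v 0) • f 5 := by
    intro v
    conv_lhs => rw [hA v]
    simp only [map_add, map_smul, hJ0, hJ1, hJ2, hJ3, hJ4, hJ5]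
    module
  have hJ0c : ∀ v : L, f.repr (J v) 0 = -(f.repr v 5) := by
    intro v; rw [hJv v]; simp [Basis.repr_self, Finsupp.single_apply]
  have hJ1c : ∀ v : L, f.repr (J v) 1 = -(f.repr v 2) := by
    intro v; rw [hJv v]; simp [Basis.repr_self, Finsupp.single_apply]
  have hJ2c : ∀ v : L, f.repr (J v) 2 = f.repr v 1 := by
    intro v; rw [hJv v]; simp [Basis.repr_self, Finsupp.single_apply]
  have hJ3c : ∀ v : L, f.repr (J v) 3 = -(f.repr v 4) := by
    intro v; rw [hJv v]; simp [Basis.repr_self, Finsupp.single_apply]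
  have hJ4c : ∀ v : L, f.repr (J v) 4 = f.repr v 3 := by
    intro v; rw [hJv v]; simp [Basis.repr_self, Finsupp.single_apply]
  have hJ5c : ∀ v : L, f.repr (J v) 5 = f.repr v 0 := by
    intro v; rw [hJv v]; simp [Basis.repr_self, Finsupp.single_apply]
  -- the metric in coordinates
  have hg00 : g (f 0) (f 0) = 1 := by rw [hg, if_pos rfl]
  have hg01 : g (f 0) (f 1) = 0 := by rw [hg, if_neg (by decide)]
  have hg02 : g (f 0) (f 2) = 0 := by rw [hg, if_neg (by decide)]
  have hg03 : g (f 0) (f 3) = 0 := by rw [hg, if_neg (by decide)]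
  have hg04 : g (f 0) (f 4) = 0 := by rw [hg, if_neg (by decide)]
  have hg05 : g (f 0) (f 5) = 0 := by rw [hg, if_neg (by decide)]
  have hg10 : g (f 1) (f 0) = 0 := by rw [hg, if_neg (by decide)]
  have hg11 : g (f 1) (f 1) = 1 := by rw [hg, if_pos rfl]
  have hg12 : g (f 1) (f 2) = 0 := by rw [hg, if_neg (by decide)]
  have hg13 : g (f 1) (f 3) = 0 := by rw [hg, if_neg (by decide)]
  have hg14 : g (f 1) (f 4) = 0 := by rw [hg, if_neg (by decide)]
  have hg15 : g (f 1) (f 5) = 0 := by rw [hg, if_neg (by decide)]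
  have hg20 : g (f 2) (f 0) = 0 := by rw [hg, if_neg (by decide)]
  have hg21 : g (f 2) (f 1) = 0 := by rw [hg, if_neg (by decide)]
  have hg22 : g (f 2) (f 2) = 1 := by rw [hg, if_pos rfl]
  have hg23 : g (f 2) (f 3) = 0 := by rw [hg, if_neg (by decide)]
  have hg24 : g (f 2) (f 4) = 0 := by rw [hg, if_neg (by decide)]
  have hg25 : g (f 2) (f 5) = 0 := by rw [hg, if_neg (by decide)]
  have hg30 : g (f 3) (f 0) = 0 := by rw [hg, if_neg (by decide)]
  have hg31 : g (f 3) (f 1) = 0 := by rw [hg, if_neg (by decide)]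
  have hg32 : g (f 3) (f 2) = 0 := by rw [hg, if_neg (by decide)]
  have hg33 : g (f 3) (f 3) = 1 := by rw [hg, if_pos rfl]
  have hg34 : g (f 3) (f 4) = 0 := by rw [hg, if_neg (by decide)]
  have hg35 : g (f 3) (f 5) = 0 := by rw [hg, if_neg (by decide)]
  have hg40 : g (f 4) (f 0) = 0 := by rw [hg, if_neg (by decide)]
  have hg41 : g (f 4) (f 1) = 0 := by rw [hg, if_neg (by decide)]
  have hg42 : g (f 4) (f 2) = 0 := by rw [hg, if_neg (by decide)]
  have hg43 : g (f 4) (f 3) = 0 := by rw [hg, if_neg (by decide)]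
  have hg44 : g (f 4) (f 4) = 1 := by rw [hg, if_pos rfl]
  have hg45 : g (f 4) (f 5) = 0 := by rw [hg, if_neg (by decide)]
  have hg50 : g (f 5) (f 0) = 0 := by rw [hg, if_neg (by decide)]
  have hg51 : g (f 5) (f 1) = 0 := by rw [hg, if_neg (by decide)]
  have hg52 : g (f 5) (f 2) = 0 := by rw [hg, if_neg (by decide)]
  have hg53 : g (f 5) (f 3) = 0 := by rw [hg, if_neg (by decide)]
  have hg54 : g (f 5) (f 4) = 0 := by rw [hg, if_neg (by decide)]
  have hg55 : g (f 5) (f 5) = 1 := by rw [hg, if_pos rfl]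
  have hgf : ∀ U V : L, g U V =
      f.repr U 0 * f.repr V 0 + f.repr U 1 * f.repr V 1 + f.repr U 2 * f.repr V 2 +
      f.repr U 3 * f.repr V 3 + f.repr U 4 * f.repr V 4 + f.repr U 5 * f.repr V 5 := by
    intro U V
    conv_lhs => rw [hA U, hA V]
    simp only [map_add, map_smul, LinearMap.add_apply, LinearMap.smul_apply,
      smul_eq_mul, hg00, hg01, hg02, hg03, hg04, hg05, hg10, hg11, hg12, hg13, hg14, hg15, hg20, hg21, hg22, hg23, hg24, hg25, hg30, hg31, hg32, hg33, hg34, hg35, hg40, hg41, hg42, hg43, hg44, hg45, hg50, hg51, hg52, hg53, hg54, hg55]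
    ring
  constructor
  · intro hs
    refine ⟨?_, ?_, ?_⟩
    · intro hα
      have h5 := LinearMap.congr_fun hα (f 5)
      simp only [LinearMap.smul_apply, LinearMap.zero_apply, Basis.coord_apply,
        Basis.repr_self, Finsupp.single_eq_same, smul_eq_mul, mul_one] at h5
      exact h2qp (by linarith)
    · intro X Y
      simp only [LinearMap.smul_apply, Basis.coord_apply, hc5, smul_eq_mul, mul_zero]
    · intro W X Y Z
      simp only [dThree, wedgeOneThree, bismutH, hgf, hc0, hc1, hc2, hc3, hc4, hc5,
        hJ0c, hJ1c, hJ2c, hJ3c, hJ4c, hJ5c, LinearMap.smul_apply, Basis.coord_apply,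
        smul_eq_mul]
      rcases hs with rfl | rfl <;> ring
  · rintro ⟨rfl, rfl⟩
    constructor
    · intro X
      rw [LinearMap.trace_eq_matrix_trace ℝ f]
      simp only [Matrix.trace, Matrix.diag, LinearMap.toMatrix_apply, LieAlgebra.ad_apply,
        Fin.sum_univ_six, hc0, hc1, hc2, hc3, hc4, hc5, Basis.repr_self,
        Finsupp.single_apply]
      try simp
      try ring
    · refine ⟨f 0, f 1, f 2, f 5, ?_⟩
      simp only [dThree, bismutH, hgf, hc0, hc1, hc2, hc3, hc4, hc5,
        hJ0c, hJ1c, hJ2c, hJ3c, hJ4c, hJ5c, Basis.repr_self]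
      simp only [Finsupp.single_eq_same, Finsupp.single_eq_of_ne (by decide : (0:Fin 6) ≠ 1),
        Finsupp.single_eq_of_ne (by decide : (0:Fin 6) ≠ 2), Finsupp.single_eq_of_ne (by decide : (0:Fin 6) ≠ 3),
        Finsupp.single_eq_of_ne (by decide : (0:Fin 6) ≠ 4), Finsupp.single_eq_of_ne (by decide : (0:Fin 6) ≠ 5),
        Finsupp.single_eq_of_ne (by decide : (1:Fin 6) ≠ 0), Finsupp.single_eq_of_ne (by decide : (1:Fin 6) ≠ 2),
        Finsupp.single_eq_of_ne (by decide : (1:Fin 6) ≠ 3), Finsupp.single_eq_of_ne (by decide : (1:Fin 6) ≠ 4),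
        Finsupp.single_eq_of_ne (by decide : (1:Fin 6) ≠ 5), Finsupp.single_eq_of_ne (by decide : (2:Fin 6) ≠ 0),
        Finsupp.single_eq_of_ne (by decide : (2:Fin 6) ≠ 1), Finsupp.single_eq_of_ne (by decide : (2:Fin 6) ≠ 3),
        Finsupp.single_eq_of_ne (by decide : (2:Fin 6) ≠ 4), Finsupp.single_eq_of_ne (by decide : (2:Fin 6) ≠ 5),
        Finsupp.single_eq_of_ne (by decide : (3:Fin 6) ≠ 0), Finsupp.single_eq_of_ne (by decide : (3:Fin 6) ≠ 1),
        Finsupp.single_eq_of_ne (by decide : (3:Fin 6) ≠ 2), Finsupp.single_eq_of_ne (by decide : (3:Fin 6) ≠ 4),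
        Finsupp.single_eq_of_ne (by decide : (3:Fin 6) ≠ 5), Finsupp.single_eq_of_ne (by decide : (4:Fin 6) ≠ 0),
        Finsupp.single_eq_of_ne (by decide : (4:Fin 6) ≠ 1), Finsupp.single_eq_of_ne (by decide : (4:Fin 6) ≠ 2),
        Finsupp.single_eq_of_ne (by decide : (4:Fin 6) ≠ 3), Finsupp.single_eq_of_ne (by decide : (4:Fin 6) ≠ 5),
        Finsupp.single_eq_of_ne (by decide : (5:Fin 6) ≠ 0), Finsupp.single_eq_of_ne (by decide : (5:Fin 6) ≠ 1),
        Finsupp.single_eq_of_ne (by decide : (5:Fin 6) ≠ 2), Finsupp.single_eq_of_ne (by decide : (5:Fin 6) ≠ 3),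
        Finsupp.single_eq_of_ne (by decide : (5:Fin 6) ≠ 4)]
      intro h0
      apply hp
      have hps : p ^ 2 = 0 := by
        first
        | linear_combination (4 : ℝ) * h0
        | linear_combination (-4 : ℝ) * h0
        | linear_combination (2 : ℝ) * h0
        | linear_combination (-2 : ℝ) * h0
        | linear_combination h0
        | linear_combination -h0
      exact pow_eq_zero_iff (n := 2) (by norm_num) |>.mp hps
end

section
/- Let 𝔤 be the 6-dimensional real Lie algebra with basis f₁,…,f₆ and nonzero brackets [f₆,f₁] = −f₂, [f₆,f₂] = f₁, [f₆,f₄] = f₃, equipped with the complex structure J defined by Jf₁ = f₂, Jf₂ = −f₁, Jf₃ = f₅, Jf₅ = −f₃, Jf₄ = f₆, Jf₆ = −f₄, and the inner product g making f₁,…,f₆ orthonormal. Then the Bismut torsion 3-form H of (J,g) satisfies dH = 0, and for every nonzero λ ∈ ℝ the 1-form α = λ·f⁴ (where f⁴ is the dual 1-form of f₄) is closed and satisfies dH = α ∧ H; hence (J,g) is a trivial LCSKT structure on 𝔤. -/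
open Module

section Aux18

variable {L : Type*} [LieRing L] [LieAlgebra ℝ L]

private lemma l23_aux_br (f : Basis (Fin 6) ℝ L)
    (hb1 : ⁅f 5, f 0⁆ = -f 1) (hb2 : ⁅f 5, f 1⁆ = f 0)
    (hb3 : ⁅f 5, f 3⁆ = f 2)
    (hb4 : ⁅f 5, f 2⁆ = 0) (hb5 : ⁅f 5, f 4⁆ = 0)
    (hb0 : ∀ i j : Fin 6, i ≠ 5 → j ≠ 5 → ⁅f i, f j⁆ = 0)
    (X Y : L) : ⁅X, Y⁆ =
      (f.repr X 5 * f.repr Y 1 - f.repr X 1 * f.repr Y 5) • f 0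
      + (f.repr X 0 * f.repr Y 5 - f.repr X 5 * f.repr Y 0) • f 1
      + (f.repr X 5 * f.repr Y 3 - f.repr X 3 * f.repr Y 5) • f 2 := by
  have hB : ∀ i j : Fin 6, ⁅f i, f j⁆ =
      (if i = 5 then (if j = 0 then -f 1 else if j = 1 then f 0 else
          if j = 3 then f 2 else 0)
       else if j = 5 then (if i = 0 then f 1 else if i = 1 then -f 0 else
          if i = 3 then -f 2 else 0)
       else 0) := by
    intro i j
    fin_cases i <;> fin_cases j <;>
      simp only [Fin.isValue, Fin.mk_zero, Fin.mk_one, Fin.reduceFinMk, reduceIte,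
        Fin.reduceEq, if_true, if_false] <;>
      first
        | exact lie_self _
        | exact hb1 | exact hb2 | exact hb3 | exact hb4 | exact hb5
        | exact hb0 _ _ (by decide) (by decide)
        | (rw [← lie_skew]; simp [hb1, hb2, hb3, hb4, hb5])
  conv_lhs => rw [← f.sum_repr X, ← f.sum_repr Y]
  rw [Fin.sum_univ_six, Fin.sum_univ_six]
  simp [add_lie, lie_add, smul_lie, lie_smul, hB]
  module

private lemma l23_aux_rbr (f : Basis (Fin 6) ℝ L)
    (hb1 : ⁅f 5, f 0⁆ = -f 1) (hb2 : ⁅f 5, f 1⁆ = f 0)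
    (hb3 : ⁅f 5, f 3⁆ = f 2)
    (hb4 : ⁅f 5, f 2⁆ = 0) (hb5 : ⁅f 5, f 4⁆ = 0)
    (hb0 : ∀ i j : Fin 6, i ≠ 5 → j ≠ 5 → ⁅f i, f j⁆ = 0)
    (i : Fin 6) (X Y : L) : f.repr ⁅X, Y⁆ i =
      (if i = 0 then f.repr X 5 * f.repr Y 1 - f.repr X 1 * f.repr Y 5 else
       if i = 1 then f.repr X 0 * f.repr Y 5 - f.repr X 5 * f.repr Y 0 else
       if i = 2 then f.repr X 5 * f.repr Y 3 - f.repr X 3 * f.repr Y 5 else 0) := by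
  rw [l23_aux_br f hb1 hb2 hb3 hb4 hb5 hb0 X Y]
  fin_cases i <;>
    simp [map_add, map_smul, Basis.repr_self, Finsupp.single_apply]

private lemma l23_aux_Jr (f : Basis (Fin 6) ℝ L) (J : L →ₗ[ℝ] L)
    (hJ0 : J (f 0) = f 1) (hJ1 : J (f 1) = -f 0)
    (hJ2 : J (f 2) = f 4) (hJ4 : J (f 4) = -f 2)
    (hJ3 : J (f 3) = f 5) (hJ5 : J (f 5) = -f 3)
    (i : Fin 6) (X : L) : f.repr (J X) i =
      (if i = 0 then -(f.repr X 1) else if i = 1 then f.repr X 0 else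
       if i = 2 then -(f.repr X 4) else if i = 3 then -(f.repr X 5) else
       if i = 4 then f.repr X 2 else f.repr X 3) := by
  have hJX : J X = (-(f.repr X 1)) • f 0 + f.repr X 0 • f 1
      + (-(f.repr X 4)) • f 2 + (-(f.repr X 5)) • f 3
      + f.repr X 2 • f 4 + f.repr X 3 • f 5 := by
    conv_lhs => rw [← f.sum_repr X, Fin.sum_univ_six]
    simp only [map_add, map_smul, hJ0, hJ1, hJ2, hJ3, hJ4, hJ5]
    module
  rw [hJX]
  fin_cases i <;>
    simp [map_add, map_smul, Basis.repr_self, Finsupp.single_apply]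

private lemma l23_aux_gf (f : Basis (Fin 6) ℝ L) (g : L →ₗ[ℝ] L →ₗ[ℝ] ℝ)
    (hg : ∀ i j : Fin 6, g (f i) (f j) = if i = j then 1 else 0)
    (i : Fin 6) (Y : L) : g (f i) Y = f.repr Y i := by
  conv_lhs => rw [← f.sum_repr Y, Fin.sum_univ_six]
  fin_cases i <;> simp [map_add, map_smul, hg]

private lemma l23_aux_H (f : Basis (Fin 6) ℝ L)
    (hb1 : ⁅f 5, f 0⁆ = -f 1) (hb2 : ⁅f 5, f 1⁆ = f 0)
    (hb3 : ⁅f 5, f 3⁆ = f 2)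
    (hb4 : ⁅f 5, f 2⁆ = 0) (hb5 : ⁅f 5, f 4⁆ = 0)
    (hb0 : ∀ i j : Fin 6, i ≠ 5 → j ≠ 5 → ⁅f i, f j⁆ = 0)
    (J : L →ₗ[ℝ] L)
    (hJ0 : J (f 0) = f 1) (hJ1 : J (f 1) = -f 0)
    (hJ2 : J (f 2) = f 4) (hJ4 : J (f 4) = -f 2)
    (hJ3 : J (f 3) = f 5) (hJ5 : J (f 5) = -f 3)
    (g : L →ₗ[ℝ] L →ₗ[ℝ] ℝ)
    (hg : ∀ i j : Fin 6, g (f i) (f j) = if i = j then 1 else 0)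
    (X Y Z : L) : bismutH J g X Y Z =
      -((f.repr X 3 * f.repr Y 0 - f.repr X 0 * f.repr Y 3) * f.repr Z 0
        + (f.repr X 3 * f.repr Y 1 - f.repr X 1 * f.repr Y 3) * f.repr Z 1
        + (f.repr X 5 * f.repr Y 3 - f.repr X 3 * f.repr Y 5) * f.repr Z 2)
      -((f.repr Y 3 * f.repr Z 0 - f.repr Y 0 * f.repr Z 3) * f.repr X 0
        + (f.repr Y 3 * f.repr Z 1 - f.repr Y 1 * f.repr Z 3) * f.repr X 1
        + (f.repr Y 5 * f.repr Z 3 - f.repr Y 3 * f.repr Z 5) * f.repr X 2)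
      -((f.repr Z 3 * f.repr X 0 - f.repr Z 0 * f.repr X 3) * f.repr Y 0
        + (f.repr Z 3 * f.repr X 1 - f.repr Z 1 * f.repr X 3) * f.repr Y 1
        + (f.repr Z 5 * f.repr X 3 - f.repr Z 3 * f.repr X 5) * f.repr Y 2) := by
  have hgv : ∀ (a b c : ℝ) (W : L), g (a • f 0 + b • f 1 + c • f 2) W
      = a * f.repr W 0 + b * f.repr W 1 + c * f.repr W 2 := by
    intro a b c W
    simp [map_add, map_smul, l23_aux_gf f g hg]
  have hJr0 : ∀ X : L, f.repr (J X) 0 = -(f.repr X 1) := fun X => by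
    simpa using l23_aux_Jr f J hJ0 hJ1 hJ2 hJ4 hJ3 hJ5 0 X
  have hJr1 : ∀ X : L, f.repr (J X) 1 = f.repr X 0 := fun X => by
    simpa using l23_aux_Jr f J hJ0 hJ1 hJ2 hJ4 hJ3 hJ5 1 X
  have hJr3 : ∀ X : L, f.repr (J X) 3 = -(f.repr X 5) := fun X => by
    simpa using l23_aux_Jr f J hJ0 hJ1 hJ2 hJ4 hJ3 hJ5 3 X
  have hJr5 : ∀ X : L, f.repr (J X) 5 = f.repr X 3 := fun X => by
    simpa using l23_aux_Jr f J hJ0 hJ1 hJ2 hJ4 hJ3 hJ5 5 X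
  simp only [bismutH]
  rw [l23_aux_br f hb1 hb2 hb3 hb4 hb5 hb0 (J X) (J Y),
    l23_aux_br f hb1 hb2 hb3 hb4 hb5 hb0 (J Y) (J Z),
    l23_aux_br f hb1 hb2 hb3 hb4 hb5 hb0 (J Z) (J X), hgv, hgv, hgv]
  simp only [hJr0, hJr1, hJr3, hJr5]
  ring

end Aux18

/-- The Lie algebra `𝔤^0_{5.14} ⊕ ℝ` with its standard
Hermitian structure `(J,g)` has `dH = 0`, and for every nonzero `λ ∈ ℝ` the
1-form `α = λ·f⁴` is closed and satisfies `dH = α ∧ H`; hence `(J,g)` is a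
trivial LCSKT structure. -/
theorem l23_trivial_lcskt
    (L : Type*) [LieRing L] [LieAlgebra ℝ L]
    (f : Basis (Fin 6) ℝ L)
    (hb1 : ⁅f 5, f 0⁆ = -f 1) (hb2 : ⁅f 5, f 1⁆ = f 0)
    (hb3 : ⁅f 5, f 3⁆ = f 2)
    (hb4 : ⁅f 5, f 2⁆ = 0) (hb5 : ⁅f 5, f 4⁆ = 0)
    (hb0 : ∀ i j : Fin 6, i ≠ 5 → j ≠ 5 → ⁅f i, f j⁆ = 0)
    (J : L →ₗ[ℝ] L)
    (hJ0 : J (f 0) = f 1) (hJ1 : J (f 1) = -f 0)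
    (hJ2 : J (f 2) = f 4) (hJ4 : J (f 4) = -f 2)
    (hJ3 : J (f 3) = f 5) (hJ5 : J (f 5) = -f 3)
    (g : L →ₗ[ℝ] L →ₗ[ℝ] ℝ)
    (hg : ∀ i j : Fin 6, g (f i) (f j) = if i = j then 1 else 0) :
    (∀ W X Y Z : L, dThree (bismutH J g) W X Y Z = 0) ∧
    (∀ lam : ℝ, lam ≠ 0 →
      (lam • (f.coord 3) ≠ 0 ∧
       IsClosedOneForm (lam • (f.coord 3)) ∧
       ∀ W X Y Z : L,
         dThree (bismutH J g) W X Y Z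
           = wedgeOneThree (lam • (f.coord 3)) (bismutH J g) W X Y Z)) := by
  have hbr := l23_aux_br f hb1 hb2 hb3 hb4 hb5 hb0
  have hr := l23_aux_rbr f hb1 hb2 hb3 hb4 hb5 hb0
  have hr0 : ∀ X Y : L, f.repr ⁅X, Y⁆ 0 =
      f.repr X 5 * f.repr Y 1 - f.repr X 1 * f.repr Y 5 := fun X Y => by
    simpa using hr 0 X Y
  have hr1 : ∀ X Y : L, f.repr ⁅X, Y⁆ 1 =
      f.repr X 0 * f.repr Y 5 - f.repr X 5 * f.repr Y 0 := fun X Y => by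
    simpa using hr 1 X Y
  have hr2 : ∀ X Y : L, f.repr ⁅X, Y⁆ 2 =
      f.repr X 5 * f.repr Y 3 - f.repr X 3 * f.repr Y 5 := fun X Y => by
    simpa using hr 2 X Y
  have hr3 : ∀ X Y : L, f.repr ⁅X, Y⁆ 3 = 0 := fun X Y => by simpa using hr 3 X Y
  have hr5 : ∀ X Y : L, f.repr ⁅X, Y⁆ 5 = 0 := fun X Y => by simpa using hr 5 X Y
  have hH := l23_aux_H f hb1 hb2 hb3 hb4 hb5 hb0 J hJ0 hJ1 hJ2 hJ4 hJ3 hJ5 g hg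
  have hdH : ∀ W X Y Z : L, dThree (bismutH J g) W X Y Z = 0 := by
    intro W X Y Z
    simp only [dThree, hH, hr0, hr1, hr2, hr3, hr5]
    ring
  refine ⟨hdH, fun lam hlam => ⟨?_, ?_, ?_⟩⟩
  · intro h
    have h3 : (lam • f.coord 3) (f 3) = 0 := by rw [h]; rfl
    simp [Basis.coord_apply, Basis.repr_self] at h3
    exact hlam h3
  · intro X Y
    simp only [LinearMap.smul_apply, Basis.coord_apply, smul_eq_mul, hr3 X Y, mul_zero]
  · intro W X Y Z
    rw [hdH W X Y Z]
    simp only [wedgeOneThree, LinearMap.smul_apply, Basis.coord_apply, smul_eq_mul, hH,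
      hr0, hr1, hr2, hr3, hr5]
    ring
end
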